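/- arXiv:2111.13870 — 7 statements merged into one kernel-verified Lean document; each statement's English description precedes it below -/
import Mathlib

section
/- Let S be a subset of a real normed space X and let x̄ ∈ S ∩ bdry S. Assume that int(cl S) ∩ U ⊆ S for some neighbourhood U of x̄. Then S is epi-Lipschitzian at x̄ if and only if 0 ∉ ∂Δ_S(x̄), where ∂ denotes the Clarke subdifferential and Δ_S is the signed distance function to S. -/
open Filter Metric Set Topology

/-- `S` is epi-Lipschitzian at `x` : there is a direction `v ≠ 0` and `γ > 0` with
`S ∩ B(x,γ) + t·B(v,γ) ⊆ S` for all `t ∈ (0,γ)`. -/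
def EpiLipschitzAt {X : Type*} [NormedAddCommGroup X] [NormedSpace ℝ X]
    (S : Set X) (x : X) : Prop :=
  ∃ v : X, v ≠ 0 ∧ ∃ γ : ℝ, 0 < γ ∧
    ∀ t : ℝ, 0 < t → t < γ → ∀ s ∈ S ∩ Metric.ball x γ, ∀ w ∈ Metric.ball v γ,
      s + t • w ∈ S

/-- The Clarke tangent cone to `S` at `x`. -/
def ClarkeTangentCone {X : Type*} [NormedAddCommGroup X] [NormedSpace ℝ X]
    (S : Set X) (x : X) : Set X :=
  {v | ∀ V ∈ 𝓝 v, ∃ U ∈ 𝓝 x, ∃ lam : ℝ, 0 < lam ∧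
    ∀ t : ℝ, 0 < t → t < lam → ∀ y ∈ U ∩ S, ∃ w ∈ V, y + t • w ∈ S}

/-- The Clarke normal cone : negative polar of the Clarke tangent cone. -/
def ClarkeNormalCone {X : Type*} [NormedAddCommGroup X] [NormedSpace ℝ X]
    (S : Set X) (x : X) : Set (X →L[ℝ] ℝ) :=
  {p | ∀ h ∈ ClarkeTangentCone S x, p h ≤ 0}

/-- Clarke generalized directional derivative of `f` at `x` in direction `h`. -/
noncomputable def clarkeDeriv {X : Type*} [NormedAddCommGroup X] [NormedSpace ℝ X]
    (f : X → ℝ) (x : X) (h : X) : ℝ :=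
  Filter.limsup (fun q : X × ℝ => (f (q.1 + q.2 • h) - f q.1) / q.2)
    ((𝓝 x) ×ˢ (𝓝[>] (0 : ℝ)))

/-- The Clarke subdifferential of `f` at `x`. -/
def ClarkeSubdiff {X : Type*} [NormedAddCommGroup X] [NormedSpace ℝ X]
    (f : X → ℝ) (x : X) : Set (X →L[ℝ] ℝ) :=
  {p | ∀ h : X, p h ≤ clarkeDeriv f x h}

/-- Signed distance function to `S`. -/
noncomputable def signedDistToSet {X : Type*} [NormedAddCommGroup X] (S : Set X) (x : X) : ℝ :=
  Metric.infDist x S - Metric.infDist x Sᶜ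

/-- `f` is Lipschitz continuous in some neighbourhood of `x`. -/
def LipschitzNear {X Y : Type*} [PseudoMetricSpace X] [PseudoMetricSpace Y]
    (f : X → Y) (x : X) : Prop :=
  ∃ K : NNReal, ∃ U ∈ 𝓝 x, LipschitzOnWith K f U

/-- `g` is strictly Hadamard differentiable at `x` with derivative `D`. -/
def HasStrictHadamardDerivAt {X Y : Type*} [NormedAddCommGroup X] [NormedSpace ℝ X]
    [NormedAddCommGroup Y] [NormedSpace ℝ Y] (g : X → Y) (D : X →L[ℝ] Y) (x : X) : Prop :=
  ∀ h : X, Filter.Tendsto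
    (fun q : ℝ × X × X => (q.1)⁻¹ • (g (q.2.1 + q.1 • q.2.2) - g q.2.1))
    ((𝓝[>] (0 : ℝ)) ×ˢ (𝓝 x) ×ˢ (𝓝 h)) (𝓝 (D h))

/-- `g` is strictly Hadamard differentiable at `x`. -/
def StrictHadamardDiffAt {X Y : Type*} [NormedAddCommGroup X] [NormedSpace ℝ X]
    [NormedAddCommGroup Y] [NormedSpace ℝ Y] (g : X → Y) (x : X) : Prop :=
  ∃ D : X →L[ℝ] Y, HasStrictHadamardDerivAt g D x

/-- `S` is compactly epi-Lipschitzian (CEL) at `x`. -/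
def CELAt {X : Type*} [NormedAddCommGroup X] [NormedSpace ℝ X] (S : Set X) (x : X) : Prop :=
  ∃ γ : ℝ, 0 < γ ∧ ∃ H : Set X, IsCompact H ∧
    ∀ t ∈ Set.Icc (0 : ℝ) γ, ∀ s ∈ S ∩ Metric.ball x γ, ∀ b ∈ Metric.ball (0 : X) 1,
      ∃ s' ∈ S, ∃ h ∈ H, s + t • b = s' + t • h

/-- The contingent (Bouligand) cone to `S` at `x`. -/
def contingentCone {X : Type*} [NormedAddCommGroup X] [NormedSpace ℝ X]
    (S : Set X) (x : X) : Set X :=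
  {v | ∀ ε : ℝ, 0 < ε → ∀ δ : ℝ, 0 < δ →
    ∃ t : ℝ, 0 < t ∧ t < δ ∧ ∃ w : X, ‖w - v‖ < ε ∧ x + t • w ∈ S}

/-- Kuratowski upper limit of a family of sets along a filter. -/
def setLimsup {α X : Type*} [NormedAddCommGroup X] (l : Filter α) (F : α → Set X) : Set X :=
  {h | Filter.liminf (fun a => Metric.infDist h (F a)) l = 0}

/-- Kuratowski lower limit of a family of sets along a filter. -/
def setLiminf {α X : Type*} [NormedAddCommGroup X] (l : Filter α) (F : α → Set X) : Set X :=
  {h | Filter.Tendsto (fun a => Metric.infDist h (F a)) l (𝓝 0)}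

section Aux
set_option linter.unusedSectionVars false
variable {X : Type*} [NormedAddCommGroup X] [NormedSpace ℝ X]

lemma signedDist_lip (S : Set X) (a b : X) :
    signedDistToSet S a ≤ signedDistToSet S b + 2 * dist a b := by
  have h1 : Metric.infDist a S ≤ Metric.infDist b S + dist a b :=
    Metric.infDist_le_infDist_add_dist
  have h2 : Metric.infDist b Sᶜ ≤ Metric.infDist a Sᶜ + dist b a :=
    Metric.infDist_le_infDist_add_dist
  rw [dist_comm b a] at h2
  simp only [signedDistToSet]
  linarith

lemma mem_of_signedDist_neg {S : Set X} {z : X} (h : signedDistToSet S z < 0) : z ∈ S := by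
  by_contra hz
  have h0 : Metric.infDist z Sᶜ = 0 := Metric.infDist_zero_of_mem hz
  have h1 : (0:ℝ) ≤ Metric.infDist z S := Metric.infDist_nonneg
  simp only [signedDistToSet, h0] at h
  linarith

lemma signedDist_nonpos_of_mem {S : Set X} {z : X} (h : z ∈ S) : signedDistToSet S z ≤ 0 := by
  have h0 : Metric.infDist z S = 0 := Metric.infDist_zero_of_mem h
  have h1 : (0:ℝ) ≤ Metric.infDist z Sᶜ := Metric.infDist_nonneg
  simp only [signedDistToSet, h0]
  linarith

lemma mem_of_dist_lt {S : Set X} {x v : X} {γ : ℝ}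
    (hepi : ∀ t : ℝ, 0 < t → t < γ → ∀ s ∈ S ∩ Metric.ball x γ, ∀ w ∈ Metric.ball v γ,
      s + t • w ∈ S)
    {s : X} (hs : s ∈ S ∩ Metric.ball x γ) {t : ℝ} (ht0 : 0 < t) (htγ : t < γ)
    {z : X} (hz : dist (s + t • v) z < t * γ) : z ∈ S := by
  set e := z - (s + t • v) with hedef
  have hze : s + t • (v + t⁻¹ • e) = z := by
    rw [smul_add, smul_inv_smul₀ ht0.ne']
    rw [hedef]; abel
  have hne : ‖e‖ < t * γ := by
    rw [hedef, ← dist_eq_norm, dist_comm]; exact hz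
  have hwball : v + t⁻¹ • e ∈ Metric.ball v γ := by
    rw [Metric.mem_ball, dist_eq_norm, add_sub_cancel_left, norm_smul, Real.norm_eq_abs,
      abs_of_pos (inv_pos.mpr ht0)]
    rw [inv_mul_lt_iff₀ ht0]
    linarith [hne]
  rw [← hze]
  exact hepi t ht0 htγ s hs _ hwball

lemma key_decrement {S : Set X} {x v : X} {γ : ℝ} (hγ : 0 < γ)
    (hxS : x ∈ S) (hSc : Sᶜ.Nonempty) (hxC : Metric.infDist x Sᶜ = 0)
    (hepi : ∀ t : ℝ, 0 < t → t < γ → ∀ s ∈ S ∩ Metric.ball x γ, ∀ w ∈ Metric.ball v γ,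
      s + t • w ∈ S)
    {y : X} {t : ℝ} (hy : dist y x < γ/8) (ht0 : 0 < t) (ht : t < γ/8) :
    signedDistToSet S (y + t • v) ≤ signedDistToSet S y - t * (γ/4) := by
  have hSne : S.Nonempty := ⟨x, hxS⟩
  have htγ : t < γ := by linarith
  have htγ0 : (0:ℝ) ≤ t * γ := by positivity
  have hdSy_le : Metric.infDist y S ≤ dist y x := Metric.infDist_le_dist_of_mem hxS
  have hdCy_le : Metric.infDist y Sᶜ ≤ dist y x := by
    have := Metric.infDist_le_infDist_add_dist (x := y) (y := x) (s := Sᶜ)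
    rw [hxC] at this; linarith
  have hdC_nonneg : (0:ℝ) ≤ Metric.infDist (y + t • v) Sᶜ := Metric.infDist_nonneg
  rcases le_or_gt (t * (γ/2)) (Metric.infDist y S) with hcase1 | hcase2
  · -- Case 1 : d_S(y) ≥ tγ/2, so y ∉ S
    have hdSy_pos : 0 < Metric.infDist y S := lt_of_lt_of_le (by positivity) hcase1
    have hynS : y ∉ S := fun hmem => by
      rw [Metric.infDist_zero_of_mem hmem] at hdSy_pos; exact lt_irrefl _ hdSy_pos
    have hdCy0 : Metric.infDist y Sᶜ = 0 := Metric.infDist_zero_of_mem hynS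
    have key : Metric.infDist (y + t • v) S ≤ Metric.infDist y S - t * (γ/2) := by
      apply le_of_forall_pos_le_add
      intro ε hε
      set ε' := min ε (γ/8) with hε'def
      have hε'0 : 0 < ε' := lt_min hε (by positivity)
      obtain ⟨s, hsS, hys⟩ := (Metric.infDist_lt_iff hSne).mp
        (lt_add_of_pos_right (Metric.infDist y S) hε'0)
      set r := dist y s with hrdef
      have hrge : Metric.infDist y S ≤ r := Metric.infDist_le_dist_of_mem hsS
      have hrpos : 0 < r := lt_of_lt_of_le hdSy_pos hrge
      have hrtγ : t * (γ/2) ≤ r := le_trans hcase1 hrge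
      have hsball : s ∈ Metric.ball x γ := by
        have htri : dist s x ≤ dist s y + dist y x := dist_triangle s y x
        rw [dist_comm s y, ← hrdef] at htri
        have hε'le : ε' ≤ γ/8 := min_le_right _ _
        rw [Metric.mem_ball]
        calc dist s x ≤ r + dist y x := htri
          _ < (Metric.infDist y S + ε') + γ/8 := by linarith
          _ < γ := by linarith
      set u := (γ/(2*r)) • (y - s) with hudef
      have hnu : ‖u‖ = γ/2 := by
        rw [hudef, norm_smul, Real.norm_eq_abs, abs_of_pos (by positivity),
          ← dist_eq_norm y s, ← hrdef]
        field_simp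
      have hwball : v + u ∈ Metric.ball v γ := by
        rw [Metric.mem_ball, dist_eq_norm, add_sub_cancel_left, hnu]
        linarith
      have hmem : s + t • (v + u) ∈ S := hepi t ht0 htγ s ⟨hsS, hsball⟩ (v + u) hwball
      have hcoef : (0:ℝ) ≤ 1 - t * (γ/(2*r)) := by
        have h1 : t * (γ/(2*r)) = (t*γ)/(2*r) := by ring
        rw [sub_nonneg, h1, div_le_one (by positivity)]
        linarith
      have heq : (y + t • v) - (s + t • (v + u)) = (1 - t * (γ/(2*r))) • (y - s) := by
        rw [hudef]; module
      have hdist : dist (y + t • v) (s + t • (v + u)) = r - t * (γ/2) := by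
        rw [dist_eq_norm, heq, norm_smul, Real.norm_eq_abs, abs_of_nonneg hcoef,
          ← dist_eq_norm y s, ← hrdef]
        field_simp
      calc Metric.infDist (y + t • v) S ≤ dist (y + t • v) (s + t • (v + u)) :=
            Metric.infDist_le_dist_of_mem hmem
        _ = r - t * (γ/2) := hdist
        _ ≤ Metric.infDist y S - t * (γ/2) + ε := by
            have : ε' ≤ ε := min_le_left _ _; linarith
    simp only [signedDistToSet, hdCy0]
    linarith
  · -- Case 2 : d_S(y) < tγ/2
    rcases le_or_gt (Metric.infDist y Sᶜ) (t * (γ/4)) with hcase2a | hcase2b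
    · -- Case 2a : d_{Sᶜ}(y) ≤ tγ/4
      apply le_of_forall_pos_le_add
      intro ε hε
      set ε' := min ε (min (t * (γ/4)) (γ/8)) with hε'def
      have hε'0 : 0 < ε' := lt_min hε (lt_min (by positivity) (by positivity))
      have hε'1 : ε' ≤ t * (γ/4) := le_trans (min_le_right _ _) (min_le_left _ _)
      have hε'2 : ε' ≤ γ/8 := le_trans (min_le_right _ _) (min_le_right _ _)
      have hε'3 : ε' ≤ ε := min_le_left _ _
      obtain ⟨s, hsS, hys⟩ := (Metric.infDist_lt_iff hSne).mp
        (lt_add_of_pos_right (Metric.infDist y S) hε'0)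
      have hys' : dist y s < 3 * (t * (γ/4)) := by linarith
      have hsball : s ∈ Metric.ball x γ := by
        have htri : dist s x ≤ dist s y + dist y x := dist_triangle s y x
        rw [dist_comm s y] at htri
        rw [Metric.mem_ball]
        calc dist s x ≤ dist y s + dist y x := htri
          _ < (Metric.infDist y S + ε') + γ/8 := by linarith
          _ < γ := by linarith
      -- y + t v ∈ S since dist (s + t v) (y + t v) = dist s y < t γ
      have hdyv : dist (s + t • v) (y + t • v) < t * γ := by
        rw [dist_add_right, dist_comm]
        linarith
      have hyvS : y + t • v ∈ S := mem_of_dist_lt hepi ⟨hsS, hsball⟩ ht0 htγ hdyv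
      have hdS0 : Metric.infDist (y + t • v) S = 0 := Metric.infDist_zero_of_mem hyvS
      -- lower bound for the distance to the complement
      have hlow : t * γ - dist y s ≤ Metric.infDist (y + t • v) Sᶜ := by
        by_contra hlt
        push_neg at hlt
        obtain ⟨z, hzC, hz⟩ := (Metric.infDist_lt_iff hSc).mp hlt
        have hzd : dist (s + t • v) z < t * γ := by
          have htri : dist (s + t • v) z ≤ dist (s + t • v) (y + t • v) + dist (y + t • v) z :=
            dist_triangle _ _ _
          rw [dist_add_right, dist_comm s y] at htri
          linarith
        exact hzC (mem_of_dist_lt hepi ⟨hsS, hsball⟩ ht0 htγ hzd)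
      simp only [signedDistToSet, hdS0]
      have hdSy_nonneg : (0:ℝ) ≤ Metric.infDist y S := Metric.infDist_nonneg
      -- signedDistToSet (y+tv) = -infDist (y+tv) Sᶜ ≤ -(tγ - dist y s) ≤ -(tγ - dS y - ε')
      -- signedDistToSet y = dS y - dC y ≥ dS y - tγ/4
      have : dist y s < Metric.infDist y S + ε' := hys
      linarith [hlow, hcase2a, hε'1, hε'3, hys, htγ0]
    · -- Case 2b : d_{Sᶜ}(y) > tγ/4, hence y ∈ interior-ish of S
      have hyS : y ∈ S := by
        by_contra hyn
        have h0 : Metric.infDist y Sᶜ = 0 :=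
          Metric.infDist_zero_of_mem (show y ∈ Sᶜ from hyn)
        rw [h0] at hcase2b
        have : (0:ℝ) < t * (γ/4) := by positivity
        linarith
      have hdSy0 : Metric.infDist y S = 0 := Metric.infDist_zero_of_mem hyS
      have hyball : y ∈ Metric.ball x γ := by rw [Metric.mem_ball]; linarith
      have hyvS : y + t • v ∈ S :=
        hepi t ht0 htγ y ⟨hyS, hyball⟩ v (Metric.mem_ball_self hγ)
      have hdS0 : Metric.infDist (y + t • v) S = 0 := Metric.infDist_zero_of_mem hyvS
      have hlow : Metric.infDist y Sᶜ + t * (γ/2) ≤ Metric.infDist (y + t • v) Sᶜ := by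
        by_contra hlt
        push_neg at hlt
        obtain ⟨z, hzC, hz⟩ := (Metric.infDist_lt_iff hSc).mp hlt
        set e := z - (y + t • v) with hedef
        have hne : ‖e‖ = dist (y + t • v) z := by
          rw [hedef, ← dist_eq_norm, dist_comm]
        rcases lt_or_ge ‖e‖ (t * γ) with hsmall | hbig
        · have hzd : dist (y + t • v) z < t * γ := by rw [← hne]; exact hsmall
          exact hzC (mem_of_dist_lt hepi ⟨hyS, hyball⟩ ht0 htγ hzd)
        · have he0 : 0 < ‖e‖ := lt_of_lt_of_le (by positivity) hbig
          set u := (γ/(2*‖e‖)) • e with hudef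
          have hnu : ‖u‖ = γ/2 := by
            rw [hudef, norm_smul, Real.norm_eq_abs, abs_of_pos (by positivity)]
            field_simp
          set p := y + (1 - t * (γ/(2*‖e‖))) • e with hpdef
          have hcoef : (0:ℝ) ≤ 1 - t * (γ/(2*‖e‖)) := by
            have h1 : t * (γ/(2*‖e‖)) = (t*γ)/(2*‖e‖) := by ring
            rw [sub_nonneg, h1, div_le_one (by positivity)]
            linarith
          have hpy : ‖p - y‖ = ‖e‖ - t * (γ/2) := by
            rw [hpdef, add_sub_cancel_left, norm_smul, Real.norm_eq_abs,
              abs_of_nonneg hcoef]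
            field_simp
          have hpylt : ‖p - y‖ < Metric.infDist y Sᶜ := by
            rw [hpy, hne]
            linarith
          have hpS : p ∈ S := by
            by_contra hpn
            have : Metric.infDist y Sᶜ ≤ dist y p := Metric.infDist_le_dist_of_mem hpn
            rw [dist_eq_norm, norm_sub_rev] at this
            linarith
          have hpball : p ∈ Metric.ball x γ := by
            rw [Metric.mem_ball]
            have htri : dist p x ≤ dist p y + dist y x := dist_triangle p y x
            have hpy2 : dist p y = ‖p - y‖ := dist_eq_norm p y
            have hlt2 : ‖p - y‖ < dist y x := lt_of_lt_of_le hpylt hdCy_le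
            linarith
          have hwball : v + u ∈ Metric.ball v γ := by
            rw [Metric.mem_ball, dist_eq_norm, add_sub_cancel_left, hnu]
            linarith
          have hmem : p + t • (v + u) ∈ S := hepi t ht0 htγ p ⟨hpS, hpball⟩ (v + u) hwball
          have hzeq : p + t • (v + u) = z := by
            have hze : z = (y + t • v) + e := by rw [hedef]; abel
            rw [hpdef, hudef, hze]
            module
          rw [hzeq] at hmem
          exact hzC hmem
      simp only [signedDistToSet, hdS0, hdSy0]
      linarith

end Aux

theorem epiLipschitz_iff_zero_not_mem_clarkeSubdiff_signedDist
    {X : Type*} [NormedAddCommGroup X] [NormedSpace ℝ X]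
    (S : Set X) (x : X) (hxS : x ∈ S) (hxb : x ∈ frontier S)
    (hU : ∃ U ∈ 𝓝 x, interior (closure S) ∩ U ⊆ S) :
    EpiLipschitzAt S x ↔ (0 : X →L[ℝ] ℝ) ∉ ClarkeSubdiff (signedDistToSet S) x := by
  have hxcl : x ∈ closure Sᶜ := by
    rw [closure_compl]
    exact hxb.2
  have hSc : Sᶜ.Nonempty := by
    rcases Set.eq_empty_or_nonempty Sᶜ with he | hne
    · rw [he, closure_empty] at hxcl
      exact absurd hxcl (Set.notMem_empty x)
    · exact hne
  have hxC : Metric.infDist x Sᶜ = 0 := Metric.infDist_zero_of_mem_closure hxcl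
  constructor
  · rintro ⟨v, hv0, γ, hγ, hepi⟩ h0mem
    have h0 : (0:ℝ) ≤ clarkeDeriv (signedDistToSet S) x v := by
      have := h0mem v
      rwa [ContinuousLinearMap.zero_apply] at this
    have hev : ∀ᶠ q : X × ℝ in (𝓝 x) ×ˢ (𝓝[>] (0:ℝ)),
        (signedDistToSet S (q.1 + q.2 • v) - signedDistToSet S q.1) / q.2 ≤ -(γ/4) := by
      apply Filter.eventually_of_mem
        (Filter.prod_mem_prod (Metric.ball_mem_nhds x (by positivity : (0:ℝ) < γ/8))
          (Ioo_mem_nhdsGT_of_mem (show (0:ℝ) ∈ Set.Ico (0:ℝ) (γ/8) from ⟨le_refl _, by positivity⟩)))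
      rintro ⟨y, t⟩ ⟨hy, ht⟩
      have hkey := key_decrement hγ hxS hSc hxC hepi (Metric.mem_ball.mp hy) ht.1 ht.2
      rw [div_le_iff₀ ht.1]
      linarith [hkey]
    have hbound : ∀ᶠ q : X × ℝ in (𝓝 x) ×ˢ (𝓝[>] (0:ℝ)),
        -(2*‖v‖) ≤ (signedDistToSet S (q.1 + q.2 • v) - signedDistToSet S q.1) / q.2 := by
      apply Filter.eventually_of_mem (Filter.prod_mem_prod Filter.univ_mem self_mem_nhdsWithin)
      rintro ⟨y, t⟩ ⟨-, ht⟩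
      have ht0 : (0:ℝ) < t := ht
      have hlip := signedDist_lip S y (y + t • v)
      have hd : dist y (y + t • v) = t * ‖v‖ := by
        rw [dist_comm, dist_eq_norm, add_sub_cancel_left, norm_smul, Real.norm_eq_abs,
          abs_of_pos ht0]
      rw [hd] at hlip
      rw [le_div_iff₀ ht0]
      linarith
    have hcb : Filter.IsCoboundedUnder (· ≤ ·) ((𝓝 x) ×ˢ (𝓝[>] (0:ℝ)))
        (fun q : X × ℝ => (signedDistToSet S (q.1 + q.2 • v) - signedDistToSet S q.1) / q.2) :=
      Filter.isCoboundedUnder_le_of_eventually_le _ hbound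
    have hlim : clarkeDeriv (signedDistToSet S) x v ≤ -(γ/4) :=
      Filter.limsup_le_of_le hcb hev
    have : (0:ℝ) < γ/4 := by positivity
    linarith
  · intro h0
    simp only [ClarkeSubdiff, Set.mem_setOf_eq] at h0
    push_neg at h0
    obtain ⟨h, hcd⟩ := h0
    rw [ContinuousLinearMap.zero_apply] at hcd
    set c := clarkeDeriv (signedDistToSet S) x h with hc
    have hcneg : c < 0 := hcd
    have hne : h ≠ 0 := by
      rintro rfl
      have hz : c = 0 := by
        rw [hc, clarkeDeriv]
        have heq : (fun q : X × ℝ =>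
            (signedDistToSet S (q.1 + q.2 • (0:X)) - signedDistToSet S q.1) / q.2) = fun _ => (0:ℝ) := by
          funext q; simp
        rw [heq, Filter.limsup_const]
      linarith
    have hub : ∀ᶠ q : X × ℝ in (𝓝 x) ×ˢ (𝓝[>] (0:ℝ)),
        (signedDistToSet S (q.1 + q.2 • h) - signedDistToSet S q.1) / q.2 ≤ 2*‖h‖ := by
      apply Filter.eventually_of_mem (Filter.prod_mem_prod Filter.univ_mem self_mem_nhdsWithin)
      rintro ⟨y, t⟩ ⟨-, ht⟩
      have ht0 : (0:ℝ) < t := ht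
      have hlip := signedDist_lip S (y + t • h) y
      have hd : dist (y + t • h) y = t * ‖h‖ := by
        rw [dist_eq_norm, add_sub_cancel_left, norm_smul, Real.norm_eq_abs, abs_of_pos ht0]
      rw [hd] at hlip
      rw [div_le_iff₀ ht0]
      linarith
    have hb : Filter.IsBoundedUnder (· ≤ ·) ((𝓝 x) ×ˢ (𝓝[>] (0:ℝ)))
        (fun q : X × ℝ => (signedDistToSet S (q.1 + q.2 • h) - signedDistToSet S q.1) / q.2) :=
      ⟨2*‖h‖, Filter.eventually_map.mpr hub⟩
    have hev2 : ∀ᶠ q : X × ℝ in (𝓝 x) ×ˢ (𝓝[>] (0:ℝ)),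
        (signedDistToSet S (q.1 + q.2 • h) - signedDistToSet S q.1) / q.2 < c/2 := by
      apply Filter.eventually_lt_of_limsup_lt _ hb
      have hrfl : Filter.limsup (fun q : X × ℝ =>
          (signedDistToSet S (q.1 + q.2 • h) - signedDistToSet S q.1) / q.2)
          ((𝓝 x) ×ˢ (𝓝[>] (0:ℝ))) = c := rfl
      rw [hrfl]
      linarith
    obtain ⟨A, hA, B, hB, hAB⟩ := Filter.mem_prod_iff.mp hev2
    obtain ⟨δ, hδ0, hδ⟩ := Metric.mem_nhds_iff.mp hA
    obtain ⟨u, hu0, hu⟩ := mem_nhdsGT_iff_exists_Ioc_subset.mp hB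
    set γ := min δ (min u (-(c/4))) with hγdef
    have hγ0 : 0 < γ := lt_min hδ0 (lt_min hu0 (by linarith))
    refine ⟨h, hne, γ, hγ0, ?_⟩
    intro t ht0 htγ s hs w hw
    have hsA : s ∈ A := hδ (Metric.ball_subset_ball (min_le_left _ _) hs.2)
    have htB : t ∈ B := hu ⟨ht0,
      le_of_lt (lt_of_lt_of_le htγ (le_trans (min_le_right _ _) (min_le_left _ _)))⟩
    have hq : ((s, t) : X × ℝ) ∈ {q : X × ℝ |
        (signedDistToSet S (q.1 + q.2 • h) - signedDistToSet S q.1) / q.2 < c/2} :=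
      hAB (Set.mk_mem_prod hsA htB)
    simp only [Set.mem_setOf_eq] at hq
    rw [div_lt_iff₀ ht0] at hq
    have hfs : signedDistToSet S s ≤ 0 := signedDist_nonpos_of_mem hs.1
    have h1 : signedDistToSet S (s + t • h) < t * (c/2) := by linarith
    have hlip := signedDist_lip S (s + t • w) (s + t • h)
    have hdist : dist (s + t • w) (s + t • h) = t * ‖w - h‖ := by
      rw [dist_eq_norm, add_sub_add_left_eq_sub, ← smul_sub, norm_smul, Real.norm_eq_abs,
        abs_of_pos ht0]
    have hwh : ‖w - h‖ < γ := by
      rw [← dist_eq_norm]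
      exact Metric.mem_ball.mp hw
    have hγc : γ ≤ -(c/4) := le_trans (min_le_right _ _) (min_le_right _ _)
    have h2 : 2 * dist (s + t • w) (s + t • h) < 2 * (t * γ) := by
      rw [hdist]
      nlinarith [mul_lt_mul_of_pos_left hwh ht0]
    have h3 : t * γ ≤ t * (-(c/4)) := mul_le_mul_of_nonneg_left hγc ht0.le
    have hneg : signedDistToSet S (s + t • w) < 0 := by linarith
    exact mem_of_signedDist_neg hneg
end

section
/- Let S be a subset of a real normed space X which is epi-Lipschitzian at x̄ ∈ S ∩ bdry S. Then the Clarke normal cone of S at x̄ satisfies N(S,x̄) = ℝ₊ ∂Δ_S(x̄), where ℝ₊ = [0,+∞), ∂ denotes the Clarke subdifferential and Δ_S is the signed distance function to S. -/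
open Filter Metric Set Topology

set_option maxHeartbeats 1000000

namespace CNCaux

variable {X : Type*} [NormedAddCommGroup X] [NormedSpace ℝ X]

/-- If a ball of radius `R` around `c` is inside `A` and `p` is at distance `≥ R` from `c`,
then `infDist p A ≤ dist p c - R`. -/
lemma infDist_le_of_ball_subset {A : Set X} {c p : X} {R : ℝ} (hR : 0 < R)
    (hsub : ball c R ⊆ A) (hp : R ≤ dist p c) :
    infDist p A ≤ dist p c - R := by
  have hd : 0 < dist p c := lt_of_lt_of_le hR hp
  refine le_of_forall_pos_le_add fun η hη => ?_
  rcases le_or_gt R η with hRη | hηR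
  · have : infDist p A ≤ dist p c :=
      infDist_le_dist_of_mem (hsub (mem_ball_self hR))
    linarith
  · set a : ℝ := (R - η) / dist p c with ha
    have ha0 : 0 ≤ a := div_nonneg (by linarith) hd.le
    have ha1 : a ≤ 1 := by
      rw [ha, div_le_one hd]; linarith
    set y : X := c + a • (p - c) with hy
    have hyc : dist y c = R - η := by
      rw [hy, dist_eq_norm, add_sub_cancel_left, norm_smul, Real.norm_eq_abs,
        abs_of_nonneg ha0, ha]
      rw [div_mul_eq_mul_div, ← dist_eq_norm]
      field_simp
    have hymem : y ∈ A := hsub (by rw [mem_ball, hyc]; linarith)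
    have hpy : dist p y = dist p c - (R - η) := by
      have : p - y = (1 - a) • (p - c) := by
        rw [hy]; rw [sub_smul, one_smul]; abel
      rw [dist_eq_norm, this, norm_smul, Real.norm_eq_abs, abs_of_nonneg (by linarith),
        ← dist_eq_norm, ha, sub_mul, div_mul_eq_mul_div, one_mul]
      field_simp
    calc infDist p A ≤ dist p y := infDist_le_dist_of_mem hymem
      _ = dist p c - R + η := by rw [hpy]; ring

/-- If `ball c R ⊆ A` then every point is at signed distance at least `R - dist p c` from `Aᶜ`. -/
lemma le_infDist_compl_of_ball_subset {A : Set X} {c : X} {R : ℝ}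
    (hsub : ball c R ⊆ A) (hne : Aᶜ.Nonempty) (p : X) :
    R - dist p c ≤ infDist p Aᶜ := by
  by_contra hcon
  push_neg at hcon
  obtain ⟨u, huA, hu⟩ := (infDist_lt_iff hne).1 hcon
  have : u ∈ ball c R := by
    rw [mem_ball]
    calc dist u c ≤ dist u p + dist p c := dist_triangle _ _ _
      _ = dist p u + dist p c := by rw [dist_comm]
      _ < (R - dist p c) + dist p c := by linarith
      _ = R := by ring
  exact huA (hsub this)

lemma signedDist_le_of_ball_subset {S : Set X} {c : X} {R : ℝ} (hR : 0 < R)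
    (hsub : ball c R ⊆ S) (hne : Sᶜ.Nonempty) (p : X) :
    signedDistToSet S p ≤ dist p c - R := by
  rcases le_or_gt R (dist p c) with hle | hlt
  · have h1 : infDist p S ≤ dist p c - R := infDist_le_of_ball_subset hR hsub hle
    have h2 : (0:ℝ) ≤ infDist p Sᶜ := infDist_nonneg
    unfold signedDistToSet; linarith
  · have hpS : p ∈ S := hsub (mem_ball.2 hlt)
    have h1 : infDist p S = 0 := infDist_zero_of_mem hpS
    have h2 : R - dist p c ≤ infDist p Sᶜ := le_infDist_compl_of_ball_subset hsub hne p
    unfold signedDistToSet; linarith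

lemma signedDist_lip (S : Set X) (a b : X) :
    signedDistToSet S a ≤ signedDistToSet S b + 2 * dist a b := by
  have h1 : infDist a S ≤ infDist b S + dist a b := infDist_le_infDist_add_dist
  have h2 : infDist b Sᶜ ≤ infDist a Sᶜ + dist b a := infDist_le_infDist_add_dist
  rw [dist_comm b a] at h2
  unfold signedDistToSet; linarith

end CNCaux

namespace CNCaux

variable {X : Type*} [NormedAddCommGroup X] [NormedSpace ℝ X]

def lfil (x : X) : Filter (X × ℝ) := (𝓝 x) ×ˢ (𝓝[>] (0 : ℝ))

noncomputable def uq (S : Set X) (h : X) : X × ℝ → ℝ :=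
  fun q => (signedDistToSet S (q.1 + q.2 • h) - signedDistToSet S q.1) / q.2

instance lfil_neBot (x : X) : (lfil x).NeBot := by unfold lfil; infer_instance

lemma clarkeDeriv_eq (S : Set X) (x h : X) :
    clarkeDeriv (signedDistToSet S) x h = Filter.limsup (uq S h) (lfil x) := rfl

lemma uq_abs_le (S : Set X) (x h : X) : ∀ᶠ q in lfil x, |uq S h q| ≤ 2 * ‖h‖ := by
  have hmem : (univ ×ˢ Ioi (0:ℝ)) ∈ lfil x := prod_mem_prod univ_mem self_mem_nhdsWithin
  refine eventually_of_mem hmem ?_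
  rintro ⟨z, t⟩ ⟨-, ht⟩
  simp only [mem_Ioi] at ht
  have key : ∀ a b : X, signedDistToSet S a - signedDistToSet S b ≤ 2 * dist a b := fun a b => by
    have := signedDist_lip S a b; linarith
  have e : dist (z + t • h) z = t * ‖h‖ := by
    rw [dist_eq_norm, add_sub_cancel_left, norm_smul, Real.norm_eq_abs, abs_of_pos ht]
  have h1 : |signedDistToSet S (z + t • h) - signedDistToSet S z| ≤ 2 * (t * ‖h‖) := by
    rw [abs_sub_le_iff]
    constructor
    · have := key (z + t • h) z; rw [e] at this; linarith
    · have := key z (z + t • h); rw [dist_comm, e] at this; linarith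
  show |(signedDistToSet S (z + t • h) - signedDistToSet S z) / t| ≤ 2 * ‖h‖
  rw [abs_div, abs_of_pos ht, div_le_iff₀ ht]
  calc |signedDistToSet S (z + t • h) - signedDistToSet S z| ≤ 2 * (t * ‖h‖) := h1
    _ = 2 * ‖h‖ * t := by ring

lemma uq_bddAbove (S : Set X) (x h : X) : (lfil x).IsBoundedUnder (· ≤ ·) (uq S h) :=
  ⟨2 * ‖h‖, by
    rw [Filter.eventually_map]
    filter_upwards [uq_abs_le S x h] with q hq using (abs_le.1 hq).2⟩

lemma uq_bddBelow (S : Set X) (x h : X) : (lfil x).IsBoundedUnder (· ≥ ·) (uq S h) :=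
  ⟨-(2 * ‖h‖), by
    rw [Filter.eventually_map]
    filter_upwards [uq_abs_le S x h] with q hq using (abs_le.1 hq).1⟩

lemma sigma_le_of_eventually_le {S : Set X} {x h : X} {c : ℝ}
    (hev : ∀ᶠ q in lfil x, uq S h q ≤ c) : clarkeDeriv (signedDistToSet S) x h ≤ c := by
  rw [clarkeDeriv_eq]
  exact Filter.limsup_le_of_le ((uq_bddBelow S x h).isCoboundedUnder_le) hev

lemma eventually_uq_lt {S : Set X} {x h : X} {c : ℝ}
    (hc : clarkeDeriv (signedDistToSet S) x h < c) : ∀ᶠ q in lfil x, uq S h q < c := by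
  rw [clarkeDeriv_eq] at hc
  exact Filter.eventually_lt_of_limsup_lt hc (uq_bddAbove S x h)

lemma sigma_le_two_norm (S : Set X) (x h : X) :
    clarkeDeriv (signedDistToSet S) x h ≤ 2 * ‖h‖ :=
  sigma_le_of_eventually_le <| by
    filter_upwards [uq_abs_le S x h] with q hq using (abs_le.1 hq).2

lemma sigma_zero (S : Set X) (x : X) : clarkeDeriv (signedDistToSet S) x 0 = 0 := by
  rw [clarkeDeriv_eq]
  have huq : uq S 0 = fun _ => (0:ℝ) := by
    funext q
    show (signedDistToSet S (q.1 + q.2 • (0:X)) - signedDistToSet S q.1) / q.2 = 0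
    simp
  rw [huq]
  exact Filter.limsup_const 0

lemma tendsto_mul_nhdsGT {c : ℝ} (hc : 0 < c) :
    Filter.Tendsto (fun t : ℝ => c * t) (𝓝[>] (0:ℝ)) (𝓝[>] (0:ℝ)) := by
  rw [tendsto_nhdsWithin_iff]
  constructor
  · have h0 : Filter.Tendsto (fun t : ℝ => c * t) (𝓝 (0:ℝ)) (𝓝 (c * 0)) :=
      (continuous_const.mul continuous_id).tendsto 0
    rw [mul_zero] at h0
    exact h0.mono_left nhdsWithin_le_nhds
  · filter_upwards [self_mem_nhdsWithin] with t ht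
    exact mul_pos hc ht

lemma lfil_map_psi {x : X} {c : ℝ} (hc : 0 < c) :
    Filter.map (fun q : X × ℝ => (q.1, c * q.2)) (lfil x) = lfil x := by
  have hfwd : Filter.Tendsto (fun q : X × ℝ => (q.1, c * q.2)) (lfil x) (lfil x) :=
    Filter.Tendsto.prodMk tendsto_fst ((tendsto_mul_nhdsGT hc).comp tendsto_snd)
  have hbwd : Filter.Tendsto (fun q : X × ℝ => (q.1, c⁻¹ * q.2)) (lfil x) (lfil x) :=
    Filter.Tendsto.prodMk tendsto_fst ((tendsto_mul_nhdsGT (by positivity)).comp tendsto_snd)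
  refine le_antisymm hfwd ?_
  have hid : (fun q : X × ℝ => (q.1, c * q.2)) ∘ (fun q : X × ℝ => (q.1, c⁻¹ * q.2)) = id := by
    funext q
    simp [Function.comp, ← mul_assoc, mul_inv_cancel₀ (ne_of_gt hc)]
  calc lfil x = Filter.map ((fun q : X × ℝ => (q.1, c * q.2)) ∘ (fun q : X × ℝ => (q.1, c⁻¹ * q.2)))
        (lfil x) := by rw [hid, Filter.map_id]
    _ = Filter.map (fun q : X × ℝ => (q.1, c * q.2))
        (Filter.map (fun q : X × ℝ => (q.1, c⁻¹ * q.2)) (lfil x)) := (Filter.map_map).symm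
    _ ≤ Filter.map (fun q : X × ℝ => (q.1, c * q.2)) (lfil x) := Filter.map_mono hbwd

lemma sigma_smul (S : Set X) (x : X) {c : ℝ} (hc : 0 < c) (h : X) :
    clarkeDeriv (signedDistToSet S) x (c • h) = c * clarkeDeriv (signedDistToSet S) x h := by
  have hfun : uq S (c • h) =
      ((fun a : ℝ => c * a) ∘ uq S h) ∘ (fun q : X × ℝ => (q.1, c * q.2)) := by
    funext q
    show (signedDistToSet S (q.1 + q.2 • (c • h)) - signedDistToSet S q.1) / q.2
      = c * ((signedDistToSet S (q.1 + (c * q.2) • h) - signedDistToSet S q.1) / (c * q.2))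
    rw [smul_smul, mul_comm q.2 c]
    rcases eq_or_ne q.2 0 with h0 | h0
    · simp [h0]
    · field_simp
  rw [clarkeDeriv_eq, clarkeDeriv_eq, hfun,
    Filter.limsup_comp ((fun a : ℝ => c * a) ∘ uq S h) (fun q : X × ℝ => (q.1, c * q.2)) (lfil x),
    lfil_map_psi hc]
  have hgb : (lfil x).IsBoundedUnder (· ≤ ·) fun q => (OrderIso.mulLeft₀ c hc) (uq S h q) := by
    refine ⟨c * (2 * ‖h‖), ?_⟩
    rw [Filter.eventually_map]
    filter_upwards [uq_abs_le S x h] with q hq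
    show c * uq S h q ≤ c * (2 * ‖h‖)
    exact mul_le_mul_of_nonneg_left ((abs_le.1 hq).2) hc.le
  have hgc : (lfil x).IsCoboundedUnder (· ≤ ·) fun q => (OrderIso.mulLeft₀ c hc) (uq S h q) := by
    refine Filter.IsBoundedUnder.isCoboundedUnder_le ⟨c * (-(2 * ‖h‖)), ?_⟩
    rw [Filter.eventually_map]
    filter_upwards [uq_abs_le S x h] with q hq
    show c * (-(2 * ‖h‖)) ≤ c * uq S h q
    exact mul_le_mul_of_nonneg_left ((abs_le.1 hq).1) hc.le
  have := (OrderIso.mulLeft₀ c hc).limsup_apply (f := lfil x) (u := uq S h)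
    (uq_bddAbove S x h) ((uq_bddBelow S x h).isCoboundedUnder_le) hgb hgc
  exact this.symm

lemma sigma_add_le (S : Set X) (x : X) (h₁ h₂ : X) :
    clarkeDeriv (signedDistToSet S) x (h₁ + h₂)
      ≤ clarkeDeriv (signedDistToSet S) x h₁ + clarkeDeriv (signedDistToSet S) x h₂ := by
  set φ : X × ℝ → X × ℝ := fun q => (q.1 + q.2 • h₁, q.2) with hφdef
  have hφ : Filter.Tendsto φ (lfil x) (lfil x) := by
    refine Filter.Tendsto.prodMk ?_ tendsto_snd
    have h1 : Filter.Tendsto (fun q : X × ℝ => q.1) (lfil x) (𝓝 x) := tendsto_fst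
    have h2 : Filter.Tendsto (fun q : X × ℝ => q.2) (lfil x) (𝓝 (0:ℝ)) :=
      tendsto_snd.mono_right nhdsWithin_le_nhds
    have := h1.add (h2.smul_const h₁)
    simpa using this
  have hdecomp : ∀ q : X × ℝ, uq S (h₁ + h₂) q = uq S h₁ q + uq S h₂ (φ q) := by
    rintro ⟨z, t⟩
    show (signedDistToSet S (z + t • (h₁ + h₂)) - signedDistToSet S z) / t
      = (signedDistToSet S (z + t • h₁) - signedDistToSet S z) / t
        + (signedDistToSet S ((z + t • h₁) + t • h₂) - signedDistToSet S (z + t • h₁)) / t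
    rw [← add_div, smul_add, ← add_assoc]
    congr 1
    ring
  refine le_of_forall_pos_le_add fun η hη => ?_
  have e1 : ∀ᶠ q in lfil x, uq S h₁ q < clarkeDeriv (signedDistToSet S) x h₁ + η / 2 :=
    eventually_uq_lt (by linarith)
  have e2' : ∀ᶠ q in lfil x, uq S h₂ q < clarkeDeriv (signedDistToSet S) x h₂ + η / 2 :=
    eventually_uq_lt (by linarith)
  have e2 : ∀ᶠ q in lfil x, uq S h₂ (φ q) < clarkeDeriv (signedDistToSet S) x h₂ + η / 2 :=
    hφ.eventually e2'
  apply sigma_le_of_eventually_le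
  filter_upwards [e1, e2] with q hq1 hq2
  rw [hdecomp q]
  linarith

end CNCaux

namespace CNCaux

variable {X : Type*} [NormedAddCommGroup X] [NormedSpace ℝ X]

/-- Hypertangency of direction `w` with modulus `ε`. -/
def Hyper (S : Set X) (x w : X) (ε : ℝ) : Prop :=
  ∀ s ∈ S ∩ ball x ε, ∀ t : ℝ, 0 < t → t < ε → ∀ w' ∈ ball w ε, s + t • w' ∈ S

lemma ball_smul_subset {S : Set X} {x w : X} {ε : ℝ} (hw : Hyper S x w ε)
    {s : X} (hs : s ∈ S ∩ ball x ε) {t : ℝ} (ht0 : 0 < t) (htε : t < ε) :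
    ball (s + t • w) (t * ε) ⊆ S := by
  intro y hy
  have hty : s + t • (t⁻¹ • (y - s)) = y := by
    rw [smul_smul, mul_inv_cancel₀ (ne_of_gt ht0), one_smul]; abel
  have hmem : t⁻¹ • (y - s) ∈ ball w ε := by
    rw [mem_ball, dist_eq_norm]
    have e1 : t⁻¹ • (y - (s + t • w)) = t⁻¹ • (y - s) - w := by
      rw [show y - (s + t • w) = (y - s) - t • w by abel, smul_sub, smul_smul,
        inv_mul_cancel₀ (ne_of_gt ht0), one_smul]
    rw [← e1, norm_smul, Real.norm_eq_abs, abs_of_pos (inv_pos.2 ht0)]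
    have hyd : ‖y - (s + t • w)‖ < t * ε := by
      rw [← dist_eq_norm]; exact hy
    calc t⁻¹ * ‖y - (s + t • w)‖ < t⁻¹ * (t * ε) :=
          mul_lt_mul_of_pos_left hyd (inv_pos.2 ht0)
      _ = ε := by field_simp
  have := hw s hs t ht0 htε _ hmem
  rwa [hty] at this

/-- Complement variant : points outside `S` sweep out complement balls backwards. -/
lemma compl_ball_subset {S : Set X} {x w : X} {ε : ℝ} (hε : 0 < ε) (hw : Hyper S x w ε)
    {u : X} (hu : u ∉ S) {t : ℝ} (ht0 : 0 < t) (htε : t < ε)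
    (hloc : ∀ w' ∈ ball w ε, u - t • w' ∈ ball x ε) :
    ball (u - t • w) (t * ε) ⊆ Sᶜ := by
  intro y hy
  have hw' : t⁻¹ • (u - y) ∈ ball w ε := by
    rw [mem_ball, dist_eq_norm]
    have e1 : t⁻¹ • ((u - t • w) - y) = t⁻¹ • (u - y) - w := by
      rw [show (u - t • w) - y = (u - y) - t • w by abel, smul_sub, smul_smul,
        inv_mul_cancel₀ (ne_of_gt ht0), one_smul]
    rw [← e1, norm_smul, Real.norm_eq_abs, abs_of_pos (inv_pos.2 ht0)]
    have hyd : ‖(u - t • w) - y‖ < t * ε := by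
      rw [← dist_eq_norm, dist_comm]; exact hy
    calc t⁻¹ * ‖(u - t • w) - y‖ < t⁻¹ * (t * ε) := mul_lt_mul_of_pos_left hyd (inv_pos.2 ht0)
      _ = ε := by field_simp
  have hyeq : u - t • (t⁻¹ • (u - y)) = y := by
    rw [smul_smul, mul_inv_cancel₀ (ne_of_gt ht0), one_smul]; abel
  intro hyS
  have hyball : u - t • (t⁻¹ • (u - y)) ∈ ball x ε := hloc _ hw'
  rw [hyeq] at hyball
  have := hw y ⟨hyS, hyball⟩ t ht0 htε _ hw'
  rw [show y + t • (t⁻¹ • (u - y)) = u by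
    rw [smul_smul, mul_inv_cancel₀ (ne_of_gt ht0), one_smul]; abel] at this
  exact hu this

/-- Key decrease estimate : along a hypertangent direction the signed distance
decreases at linear rate. -/
lemma eventually_uq_le_of_hyper {S : Set X} {x w : X} {ε : ℝ}
    (hxS : x ∈ S) (hxc : x ∈ closure Sᶜ) (hε : 0 < ε) (hw : Hyper S x w ε) :
    ∀ᶠ q in lfil x, uq S w q ≤ -(ε / 2) := by
  have hScne : Sᶜ.Nonempty := Set.Nonempty.of_closure ⟨x, hxc⟩
  have hSne : S.Nonempty := ⟨x, hxS⟩
  set C : ℝ := 3 + 2 * ε + 2 * ‖w‖ with hC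
  have hC1 : (1:ℝ) ≤ C := by nlinarith [norm_nonneg w]
  have hC0 : (0:ℝ) < C := lt_of_lt_of_le one_pos hC1
  set ρ : ℝ := ε / C with hρdef
  have hρ0 : 0 < ρ := div_pos hε hC0
  have hρC : ρ * C = ε := div_mul_cancel₀ ε (ne_of_gt hC0)
  have hρε : ρ ≤ ε := by
    calc ρ = ρ * 1 := (mul_one ρ).symm
      _ ≤ ρ * C := mul_le_mul_of_nonneg_left hC1 hρ0.le
      _ = ε := hρC
  have hmem : (ball x ρ ×ˢ Ioo (0:ℝ) ρ) ∈ lfil x :=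
    prod_mem_prod (ball_mem_nhds x hρ0) (Ioo_mem_nhdsGT_of_mem ⟨le_refl 0, hρ0⟩)
  refine eventually_of_mem hmem ?_
  rintro ⟨z, t⟩ ⟨hz, ht0, htρ⟩
  rw [mem_ball] at hz
  show (signedDistToSet S (z + t • w) - signedDistToSet S z) / t ≤ -(ε / 2)
  rw [div_le_iff₀ ht0]
  have htε : t < ε := lt_of_lt_of_le htρ hρε
  have key : signedDistToSet S (z + t • w) ≤ signedDistToSet S z - t * (ε / 2) := by
    by_cases hzS : z ∈ S
    · -- interior / membership case
      have hzball : z ∈ ball x ε := mem_ball.2 (lt_of_lt_of_le hz hρε)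
      have hzw : z + t • w ∈ S := hw z ⟨hzS, hzball⟩ t ht0 htε w (mem_ball_self hε)
      have hfz : signedDistToSet S z = -infDist z Sᶜ := by
        unfold signedDistToSet; rw [infDist_zero_of_mem hzS]; ring
      have hfzw : signedDistToSet S (z + t • w) = -infDist (z + t • w) Sᶜ := by
        unfold signedDistToSet; rw [infDist_zero_of_mem hzw]; ring
      rw [hfz, hfzw]
      have hgoal : infDist z Sᶜ + t * (ε / 2) ≤ infDist (z + t • w) Sᶜ := by
        by_contra hcon
        push_neg at hcon
        obtain ⟨u, huSc, hu⟩ := (infDist_lt_iff hScne).1 hcon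
        have huS : u ∉ S := huSc
        have hdz : infDist z Sᶜ < ρ := by
          calc infDist z Sᶜ ≤ infDist x Sᶜ + dist z x := infDist_le_infDist_add_dist
            _ = dist z x := by rw [infDist_zero_of_mem_closure hxc, zero_add]
            _ < ρ := hz
        have hdu : dist (z + t • w) u < ρ + ρ * (ε / 2) := by
          calc dist (z + t • w) u < infDist z Sᶜ + t * (ε / 2) := hu
            _ < ρ + ρ * (ε / 2) := by nlinarith
        have hux : dist u x < ρ * (2 + ε / 2 + ‖w‖) := by
          calc dist u x ≤ dist u (z + t • w) + dist (z + t • w) z + dist z x := by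
                have := dist_triangle u (z + t • w) x
                have := dist_triangle (z + t • w) z x
                linarith [dist_triangle u (z + t • w) x, dist_triangle (z + t • w) z x]
            _ < (ρ + ρ * (ε / 2)) + t * ‖w‖ + ρ := by
                have e : dist (z + t • w) z = t * ‖w‖ := by
                  rw [dist_eq_norm, add_sub_cancel_left, norm_smul, Real.norm_eq_abs,
                    abs_of_pos ht0]
                rw [dist_comm u (z + t • w), e]
                refine add_lt_add_of_lt_of_lt (add_lt_add_of_lt_of_le hdu ?_) hz
                exact le_refl _
            _ ≤ ρ * (2 + ε / 2 + ‖w‖) := by nlinarith [norm_nonneg w, ht0.le]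
        have hloc : ∀ w' ∈ ball w ε, u - t • w' ∈ ball x ε := by
          intro w' hw'
          rw [mem_ball]
          have hw'n : ‖w'‖ ≤ ‖w‖ + ε := by
            have := mem_ball_iff_norm.1 hw'
            calc ‖w'‖ = ‖w + (w' - w)‖ := by rw [show w + (w' - w) = w' from by abel]
              _ ≤ ‖w‖ + ‖w' - w‖ := norm_add_le _ _
              _ ≤ ‖w‖ + ε := by
                  have : ‖w' - w‖ < ε := by rw [← dist_eq_norm]; exact hw'
                  linarith
          calc dist (u - t • w') x ≤ dist (u - t • w') u + dist u x := dist_triangle _ _ _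
            _ = ‖t • w'‖ + dist u x := by
                rw [dist_eq_norm, show (u - t • w') - u = -(t • w') from by abel, norm_neg]
            _ < t * (‖w‖ + ε) + ρ * (2 + ε / 2 + ‖w‖) := by
                rw [norm_smul, Real.norm_eq_abs, abs_of_pos ht0]
                have h1 : t * ‖w'‖ ≤ t * (‖w‖ + ε) := by nlinarith
                linarith
            _ ≤ ρ * (‖w‖ + ε) + ρ * (2 + ε / 2 + ‖w‖) := by nlinarith [norm_nonneg w]
            _ ≤ ρ * C := by rw [hC]; nlinarith [norm_nonneg w]
            _ = ε := hρC
        have hball : ball (u - t • w) (t * ε) ⊆ Sᶜ :=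
          compl_ball_subset hε hw huS ht0 htε hloc
        have hznot : t * ε ≤ dist z (u - t • w) := by
          by_contra hlt
          push_neg at hlt
          exact (hball (mem_ball.2 hlt)) hzS
        have hid : infDist z Sᶜ ≤ dist z (u - t • w) - t * ε :=
          infDist_le_of_ball_subset (mul_pos ht0 hε) hball hznot
        have hde : dist z (u - t • w) = dist (z + t • w) u := by
          rw [dist_eq_norm, dist_eq_norm]
          congr 1
          abel
        rw [hde] at hid
        have : dist (z + t • w) u < infDist z Sᶜ + t * (ε / 2) := hu
        nlinarith
      linarith
    · -- z outside S
      have hfz : signedDistToSet S z = infDist z S := by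
        unfold signedDistToSet
        rw [show infDist z Sᶜ = 0 from infDist_zero_of_mem (Set.mem_compl hzS), sub_zero]
      have hdS : infDist z S < ρ := by
        calc infDist z S ≤ dist z x := infDist_le_dist_of_mem hxS
          _ < ρ := hz
      obtain ⟨s, hsS, hsz⟩ := (infDist_lt_iff hSne).1
        (show infDist z S < infDist z S + t * (ε / 4) by nlinarith)
      have hsx : s ∈ ball x ε := by
        rw [mem_ball]
        calc dist s x ≤ dist s z + dist z x := dist_triangle _ _ _
          _ < (infDist z S + t * (ε / 4)) + ρ := by
              rw [dist_comm s z]; exact add_lt_add_of_lt_of_lt hsz hz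
          _ < ρ * (2 + ε / 4) := by nlinarith
          _ ≤ ρ * C := by rw [hC]; nlinarith [norm_nonneg w]
          _ = ε := hρC
      have hball : ball (s + t • w) (t * ε) ⊆ S := ball_smul_subset hw ⟨hsS, hsx⟩ ht0 htε
      have hest : signedDistToSet S (z + t • w) ≤ dist (z + t • w) (s + t • w) - t * ε :=
        signedDist_le_of_ball_subset (mul_pos ht0 hε) hball hScne _
      have hde : dist (z + t • w) (s + t • w) = dist z s := dist_add_right z s (t • w)
      rw [hde] at hest
      rw [hfz]
      nlinarith [mul_pos ht0 hε]
  nlinarith [mul_pos ht0 hε]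

end CNCaux

namespace CNCaux

variable {X : Type*} [NormedAddCommGroup X] [NormedSpace ℝ X]

lemma mem_tangent_of_sigma_nonpos {S : Set X} {x h : X} (hxS : x ∈ S)
    (hσ : clarkeDeriv (signedDistToSet S) x h ≤ 0) : h ∈ ClarkeTangentCone S x := by
  intro V hV
  obtain ⟨ε, hε0, hball⟩ := Metric.mem_nhds_iff.1 hV
  have hev : ∀ᶠ q in lfil x, uq S h q < ε / 2 := eventually_uq_lt (by linarith)
  rw [Filter.eventually_iff] at hev
  rw [show lfil x = (𝓝 x) ×ˢ (𝓝[>] (0:ℝ)) from rfl, Filter.mem_prod_iff] at hev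
  obtain ⟨U, hU, W, hW, hsub⟩ := hev
  obtain ⟨b, hb, hIoo⟩ := mem_nhdsGT_iff_exists_Ioo_subset.1 hW
  refine ⟨U, hU, b, hb, ?_⟩
  intro t ht0 htb y hy
  have hq : uq S h (y, t) < ε / 2 := hsub ⟨hy.1, hIoo ⟨ht0, htb⟩⟩
  have hfy : signedDistToSet S y ≤ 0 := by
    unfold signedDistToSet
    rw [infDist_zero_of_mem hy.2]
    have := infDist_nonneg (x := y) (s := Sᶜ)
    linarith
  have hfyt : signedDistToSet S (y + t • h) < t * (ε / 2) := by
    have h1 : (signedDistToSet S (y + t • h) - signedDistToSet S y) / t < ε / 2 := hq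
    rw [div_lt_iff₀ ht0] at h1
    nlinarith
  by_cases hyS : y + t • h ∈ S
  · exact ⟨h, hball (mem_ball_self hε0), hyS⟩
  · have hd0 : infDist (y + t • h) Sᶜ = 0 := infDist_zero_of_mem (Set.mem_compl hyS)
    have hdS : infDist (y + t • h) S < t * ε := by
      unfold signedDistToSet at hfyt
      rw [hd0] at hfyt
      nlinarith [mul_pos ht0 hε0]
    obtain ⟨z, hzS, hz⟩ := (infDist_lt_iff ⟨x, hxS⟩).1 hdS
    refine ⟨t⁻¹ • (z - y), hball ?_, ?_⟩
    · rw [mem_ball, dist_eq_norm]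
      have e1 : t⁻¹ • (z - (y + t • h)) = t⁻¹ • (z - y) - h := by
        rw [show z - (y + t • h) = (z - y) - t • h from by abel, smul_sub, smul_smul,
          inv_mul_cancel₀ (ne_of_gt ht0), one_smul]
      rw [← e1, norm_smul, Real.norm_eq_abs, abs_of_pos (inv_pos.2 ht0)]
      have h2 : ‖z - (y + t • h)‖ < t * ε := by
        rw [← dist_eq_norm, dist_comm]
        exact hz
      calc t⁻¹ * ‖z - (y + t • h)‖ < t⁻¹ * (t * ε) := mul_lt_mul_of_pos_left h2 (inv_pos.2 ht0)
        _ = ε := by field_simp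
    · rw [smul_smul, mul_inv_cancel₀ (ne_of_gt ht0), one_smul,
        show y + (z - y) = z from by abel]
      exact hzS

lemma hyper_shift {S : Set X} {x h v : X} {γ r : ℝ} (hγ : 0 < γ)
    (hv : Hyper S x v γ) (hT : h ∈ ClarkeTangentCone S x) (hr : 0 < r) :
    ∃ ε : ℝ, 0 < ε ∧ Hyper S x (h + r • v) ε := by
  set δ : ℝ := r * γ / 4 with hδdef
  have hδ0 : 0 < δ := by positivity
  obtain ⟨U, hU, lam, hlam, P⟩ := hT (ball h δ) (ball_mem_nhds h hδ0)
  obtain ⟨ρ₁, hρ₁, hρU⟩ := Metric.mem_nhds_iff.1 hU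
  set M : ℝ := ‖h‖ + δ + 1 with hM
  have hM0 : 0 < M := by positivity
  set ε : ℝ := min (min ρ₁ lam) (min δ (min (γ / (1 + M)) (γ / (r + 1)))) with hε
  have hε0 : 0 < ε :=
    lt_min (lt_min hρ₁ hlam) (lt_min hδ0 (lt_min (by positivity) (by positivity)))
  refine ⟨ε, hε0, ?_⟩
  rintro s ⟨hsS, hsx⟩ t ht0 htε w'' hw''
  have hεfacts : ε ≤ ρ₁ ∧ ε ≤ lam ∧ ε ≤ δ ∧ ε ≤ γ / (1 + M) ∧ ε ≤ γ / (r + 1) := by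
    refine ⟨le_trans (min_le_left _ _) (min_le_left _ _),
      le_trans (min_le_left _ _) (min_le_right _ _),
      le_trans (min_le_right _ _) (min_le_left _ _),
      le_trans (min_le_right _ _) (le_trans (min_le_right _ _) (min_le_left _ _)),
      le_trans (min_le_right _ _) (le_trans (min_le_right _ _) (min_le_right _ _))⟩
  obtain ⟨hερ₁, hεlam, hεδ, hεM, hεr⟩ := hεfacts
  have htlam : t < lam := lt_of_lt_of_le htε hεlam
  have hsU : s ∈ U := hρU (mem_ball.2 (lt_of_lt_of_le (mem_ball.1 hsx) hερ₁))
  obtain ⟨w₀, hw₀, hsw₀⟩ := P t ht0 htlam s ⟨hsU, hsS⟩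
  set wt : X := r⁻¹ • (w'' - w₀) with hwt
  have hwtv : wt ∈ ball v γ := by
    rw [mem_ball, dist_eq_norm]
    have e1 : r⁻¹ • (w'' - w₀ - r • v) = wt - v := by
      rw [hwt, smul_sub, smul_smul, inv_mul_cancel₀ (ne_of_gt hr), one_smul]
    rw [← e1, norm_smul, Real.norm_eq_abs, abs_of_pos (inv_pos.2 hr)]
    have h1 : ‖w'' - w₀ - r • v‖ ≤ ‖w'' - (h + r • v)‖ + ‖h - w₀‖ := by
      rw [show w'' - w₀ - r • v = (w'' - (h + r • v)) + (h - w₀) from by abel]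
      exact norm_add_le _ _
    have h2 : ‖w'' - (h + r • v)‖ < ε := by rw [← dist_eq_norm]; exact hw''
    have h3 : ‖h - w₀‖ < δ := by rw [← dist_eq_norm, dist_comm]; exact hw₀
    calc r⁻¹ * ‖w'' - w₀ - r • v‖ ≤ r⁻¹ * (‖w'' - (h + r • v)‖ + ‖h - w₀‖) :=
          mul_le_mul_of_nonneg_left h1 (inv_pos.2 hr).le
      _ < r⁻¹ * (δ + δ) := by
          apply mul_lt_mul_of_pos_left _ (inv_pos.2 hr)
          have : ‖w'' - (h + r • v)‖ < δ := lt_of_lt_of_le h2 hεδ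
          linarith
      _ = γ / 2 := by rw [hδdef]; field_simp; ring
      _ < γ := by linarith
  have hw₀n : ‖w₀‖ ≤ ‖h‖ + δ := by
    have h3 : ‖w₀ - h‖ < δ := by rw [← dist_eq_norm]; exact hw₀
    calc ‖w₀‖ = ‖h + (w₀ - h)‖ := by rw [show h + (w₀ - h) = w₀ from by abel]
      _ ≤ ‖h‖ + ‖w₀ - h‖ := norm_add_le _ _
      _ ≤ ‖h‖ + δ := by linarith
  have hbase : s + t • w₀ ∈ S ∩ ball x γ := by
    refine ⟨hsw₀, mem_ball.2 ?_⟩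
    have e : dist (s + t • w₀) s = t * ‖w₀‖ := by
      rw [dist_eq_norm, add_sub_cancel_left, norm_smul, Real.norm_eq_abs, abs_of_pos ht0]
    have hεγ : ε * (1 + M) ≤ γ := by
      rw [← le_div_iff₀ (by positivity)]
      exact hεM
    calc dist (s + t • w₀) x ≤ dist (s + t • w₀) s + dist s x := dist_triangle _ _ _
      _ < t * ‖w₀‖ + ε := by
          rw [e]
          exact add_lt_add_of_le_of_lt (le_refl _) (lt_of_lt_of_le (mem_ball.1 hsx) (le_refl ε))
      _ ≤ ε * (‖h‖ + δ) + ε := by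
          have : t * ‖w₀‖ ≤ ε * (‖h‖ + δ) := by
            have h4 : t * ‖w₀‖ ≤ t * (‖h‖ + δ) := mul_le_mul_of_nonneg_left hw₀n ht0.le
            have h5 : t * (‖h‖ + δ) ≤ ε * (‖h‖ + δ) :=
              mul_le_mul_of_nonneg_right htε.le (by positivity)
            linarith
          linarith
      _ ≤ ε * (1 + M) := by rw [hM]; nlinarith [hε0.le]
      _ ≤ γ := hεγ
  have htr : t * r < γ := by
    have h1 : t * r < ε * r := mul_lt_mul_of_pos_right htε hr
    have h2 : ε * r ≤ (γ / (r + 1)) * r := mul_le_mul_of_nonneg_right hεr hr.le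
    have h3 : (γ / (r + 1)) * r < γ := by
      rw [div_mul_eq_mul_div, div_lt_iff₀ (by positivity)]
      nlinarith
    linarith
  have hres := hv _ hbase (t * r) (mul_pos ht0 hr) htr wt hwtv
  have e2 : (s + t • w₀) + (t * r) • wt = s + t • w'' := by
    rw [hwt, smul_smul, mul_assoc, mul_inv_cancel₀ (ne_of_gt hr), mul_one, smul_sub]
    abel
  rwa [e2] at hres

lemma sigma_nonpos_of_mem_tangent {S : Set X} {x v : X} {γ : ℝ}
    (hxS : x ∈ S) (hxc : x ∈ closure Sᶜ) (hγ : 0 < γ) (hv : Hyper S x v γ)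
    {h : X} (hT : h ∈ ClarkeTangentCone S x) :
    clarkeDeriv (signedDistToSet S) x h ≤ 0 := by
  refine le_of_forall_pos_le_add fun η hη => ?_
  rw [zero_add]
  set r : ℝ := η / (2 * ‖v‖ + 2) with hr
  have hr0 : 0 < r := by positivity
  obtain ⟨ε, hε0, hyp⟩ := hyper_shift hγ hv hT hr0
  have hev := eventually_uq_le_of_hyper hxS hxc hε0 hyp
  have hptwise : ∀ᶠ q in lfil x, uq S h q ≤ uq S (h + r • v) q + 2 * (r * ‖v‖) := by
    have hmem : (univ ×ˢ Ioi (0:ℝ)) ∈ lfil x := prod_mem_prod univ_mem self_mem_nhdsWithin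
    refine eventually_of_mem hmem ?_
    rintro ⟨z, t⟩ ⟨-, ht⟩
    simp only [mem_Ioi] at ht
    show (signedDistToSet S (z + t • h) - signedDistToSet S z) / t
      ≤ (signedDistToSet S (z + t • (h + r • v)) - signedDistToSet S z) / t + 2 * (r * ‖v‖)
    have hdist : dist (z + t • h) (z + t • (h + r • v)) = t * (r * ‖v‖) := by
      rw [dist_eq_norm, smul_add,
        show z + t • h - (z + (t • h + t • (r • v))) = -(t • (r • v)) from by abel,
        norm_neg, smul_smul, norm_smul, Real.norm_eq_abs, abs_of_pos (mul_pos ht hr0)]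
      ring
    have hlip : signedDistToSet S (z + t • h)
        ≤ signedDistToSet S (z + t • (h + r • v)) + 2 * (t * (r * ‖v‖)) := by
      have := signedDist_lip S (z + t • h) (z + t • (h + r • v))
      rw [hdist] at this
      linarith
    have h6 : (signedDistToSet S (z + t • h) - signedDistToSet S z) / t
        ≤ (signedDistToSet S (z + t • (h + r • v)) - signedDistToSet S z + 2 * (r * ‖v‖) * t) / t := by
      gcongr
      linarith
    have h7 : (signedDistToSet S (z + t • (h + r • v)) - signedDistToSet S z + 2 * (r * ‖v‖) * t) / t
        = (signedDistToSet S (z + t • (h + r • v)) - signedDistToSet S z) / t + 2 * (r * ‖v‖) := by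
      field_simp
    linarith [h6, h7.le]
  have hcomb : clarkeDeriv (signedDistToSet S) x h ≤ -(ε / 2) + 2 * (r * ‖v‖) := by
    apply sigma_le_of_eventually_le
    filter_upwards [hev, hptwise] with q h1 h2
    linarith
  have hrv : 2 * (r * ‖v‖) ≤ η := by
    have e : r * (2 * ‖v‖ + 2) = η := div_mul_cancel₀ η (by positivity)
    nlinarith [mul_le_mul_of_nonneg_left (show 2 * ‖v‖ ≤ 2 * ‖v‖ + 2 by linarith) hr0.le]
  linarith

end CNCaux

/-- for `S` epi-Lipschitzian at `x̄ ∈ S ∩ bdry S`,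
`N(S,x̄) = ℝ₊ ∂Δ_S(x̄)`. -/
theorem clarkeNormalCone_eq_posSMul_clarkeSubdiff_signedDist
    {X : Type*} [NormedAddCommGroup X] [NormedSpace ℝ X]
    (S : Set X) (x : X) (hxS : x ∈ S) (hxb : x ∈ frontier S)
    (hepi : EpiLipschitzAt S x) :
    ClarkeNormalCone S x =
      {p | ∃ t : ℝ, 0 ≤ t ∧ ∃ q ∈ ClarkeSubdiff (signedDistToSet S) x, p = t • q} := by
  obtain ⟨v, hv0, γ, hγ, hepi'⟩ := hepi
  have hvhyp : CNCaux.Hyper S x v γ := fun s hs t ht0 htγ w' hw' => hepi' t ht0 htγ s hs w' hw'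
  have hxc : x ∈ closure Sᶜ := by
    rw [closure_compl]
    exact hxb.2
  have hσv : clarkeDeriv (signedDistToSet S) x v ≤ -(γ / 2) :=
    CNCaux.sigma_le_of_eventually_le (CNCaux.eventually_uq_le_of_hyper hxS hxc hγ hvhyp)
  have hσvneg : clarkeDeriv (signedDistToSet S) x v < 0 := lt_of_le_of_lt hσv (by linarith)
  have hB1 : ∀ h : X, clarkeDeriv (signedDistToSet S) x h ≤ 0 → h ∈ ClarkeTangentCone S x :=
    fun h hh => CNCaux.mem_tangent_of_sigma_nonpos hxS hh
  have hB2 : ∀ h ∈ ClarkeTangentCone S x, clarkeDeriv (signedDistToSet S) x h ≤ 0 :=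
    fun h hh => CNCaux.sigma_nonpos_of_mem_tangent hxS hxc hγ hvhyp hh
  ext p
  simp only [Set.mem_setOf_eq]
  constructor
  · intro hp
    have hp' : ∀ h ∈ ClarkeTangentCone S x, p h ≤ 0 := hp
    by_cases hp0 : p = 0
    · obtain ⟨g, -, hg⟩ := exists_extension_of_le_sublinear
        (⟨⊥, 0⟩ : X →ₗ.[ℝ] ℝ) (clarkeDeriv (signedDistToSet S) x)
        (fun c hc u => CNCaux.sigma_smul S x hc u)
        (fun u₁ u₂ => CNCaux.sigma_add_le S x u₁ u₂)
        (fun u => by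
          have hu : (u : X) = 0 := (Submodule.mem_bot ℝ).1 u.2
          have h0 : (⟨⊥, 0⟩ : X →ₗ.[ℝ] ℝ) u = 0 := rfl
          rw [h0, hu, CNCaux.sigma_zero S x])
      have hgabs : ∀ u : X, ‖g u‖ ≤ 2 * ‖u‖ := by
        intro u
        rw [Real.norm_eq_abs, abs_le]
        constructor
        · have h1 := hg (-u)
          have h2 := CNCaux.sigma_le_two_norm S x (-u)
          rw [norm_neg] at h2
          rw [map_neg] at h1
          linarith
        · exact le_trans (hg u) (CNCaux.sigma_le_two_norm S x u)
      refine ⟨0, le_refl 0, LinearMap.mkContinuous g 2 hgabs, fun h => ?_, ?_⟩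
      · show g h ≤ clarkeDeriv (signedDistToSet S) x h
        exact hg h
      · rw [hp0, zero_smul]
    · set σf : X → ℝ := clarkeDeriv (signedDistToSet S) x with hσdef
      set B : Set ℝ := (fun u => p u / σf u) '' {u | σf u < 0} with hBdef
      have hBne : B.Nonempty := ⟨p v / σf v, ⟨v, hσvneg, rfl⟩⟩
      have hBlb : ∀ b ∈ B, (0:ℝ) ≤ b := by
        rintro b ⟨u, hu, rfl⟩
        have hpu : p u ≤ 0 := hp' u (hB1 u (le_of_lt hu))
        exact div_nonneg_iff.2 (Or.inr ⟨hpu, le_of_lt hu⟩)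
      have hbdd : BddBelow B := ⟨0, fun b hb => hBlb b hb⟩
      set t : ℝ := sInf B with htdef
      have ht0 : 0 ≤ t := le_csInf hBne hBlb
      have key : ∀ h : X, p h ≤ t * σf h := by
        intro h
        rcases lt_trichotomy (σf h) 0 with hneg | hzero | hpos
        · have hmem : p h / σf h ∈ B := ⟨h, hneg, rfl⟩
          have hle := csInf_le hbdd hmem
          rw [le_div_iff_of_neg hneg] at hle
          linarith
        · rw [hzero, mul_zero]
          exact hp' h (hB1 h (le_of_eq hzero))
        · have hlb : ∀ b ∈ B, p h / σf h ≤ b := by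
            rintro b ⟨u, hu, rfl⟩
            have hgσ : σf ((-σf u) • h + (σf h) • u) ≤ 0 := by
              have h1 := CNCaux.sigma_add_le S x ((-σf u) • h) ((σf h) • u)
              have h2 := CNCaux.sigma_smul S x (neg_pos.2 hu) h
              have h3 := CNCaux.sigma_smul S x hpos u
              rw [h2, h3] at h1
              nlinarith
            have hple : p ((-σf u) • h + (σf h) • u) ≤ 0 := hp' _ (hB1 _ hgσ)
            have hlin : (-σf u) * p h + σf h * p u ≤ 0 := by
              have e : p ((-σf u) • h + (σf h) • u) = (-σf u) * p h + σf h * p u := by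
                rw [map_add, map_smul, map_smul, smul_eq_mul, smul_eq_mul]
              rw [e] at hple
              exact hple
            rw [div_le_iff₀ hpos,
              show (p u / σf u) * σf h = (σf h * p u) / σf u from by ring,
              le_div_iff_of_neg hu]
            nlinarith
          have hlow : p h / σf h ≤ t := le_csInf hBne hlb
          rw [div_le_iff₀ hpos] at hlow
          linarith
      have htpos : 0 < t := by
        rcases lt_or_eq_of_le ht0 with hlt | heq
        · exact hlt
        · exfalso
          apply hp0
          ext u
          have h1 : p u ≤ 0 := by
            have := key u
            rw [← heq, zero_mul] at this
            exact this
          have h2 : p (-u) ≤ 0 := by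
            have := key (-u)
            rw [← heq, zero_mul] at this
            exact this
          rw [map_neg] at h2
          show p u = 0
          linarith
      refine ⟨t, ht0, t⁻¹ • p, fun h => ?_, ?_⟩
      · show (t⁻¹ • p) h ≤ σf h
        rw [ContinuousLinearMap.smul_apply, smul_eq_mul]
        calc t⁻¹ * p h ≤ t⁻¹ * (t * σf h) :=
              mul_le_mul_of_nonneg_left (key h) (inv_nonneg.2 ht0)
          _ = σf h := by rw [← mul_assoc, inv_mul_cancel₀ (ne_of_gt htpos), one_mul]
      · rw [smul_smul, mul_inv_cancel₀ (ne_of_gt htpos), one_smul]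
  · rintro ⟨t, ht0, q, hq, rfl⟩
    intro h hh
    have h1 : q h ≤ clarkeDeriv (signedDistToSet S) x h := hq h
    have h2 : clarkeDeriv (signedDistToSet S) x h ≤ 0 := hB2 h hh
    have h3 : (t • q) h = t * q h := rfl
    rw [h3]
    exact mul_nonpos_iff.2 (Or.inl ⟨ht0, le_trans h1 h2⟩)
end

section
/- Let g : X → ℝ be Lipschitz continuous near x̄ in a real normed space X, and let S := { x ∈ X : g(x) ≤ 0 }. Assume that x̄ ∈ bdry S and 0 ∉ ∂g(x̄), where ∂ denotes the Clarke subdifferential. Then S is epi-Lipschitzian at x̄. -/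
open Filter Metric Set Topology

/-- if `g` is Lipschitz near `x̄`, `x̄ ∈ bdry {g ≤ 0}` and
`0 ∉ ∂g(x̄)`, then `{g ≤ 0}` is epi-Lipschitzian at `x̄`. -/
theorem epiLipschitzAt_sublevel_of_zero_not_mem_clarkeSubdiff
    {X : Type*} [NormedAddCommGroup X] [NormedSpace ℝ X]
    (g : X → ℝ) (x : X) (hg : LipschitzNear g x)
    (hxb : x ∈ frontier {y : X | g y ≤ 0})
    (h0 : (0 : X →L[ℝ] ℝ) ∉ ClarkeSubdiff g x) :
    EpiLipschitzAt {y : X | g y ≤ 0} x := by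
  classical
  obtain ⟨K, U, hU, hK⟩ := hg
  have hex : ∃ v : X, clarkeDeriv g x v < 0 := by
    by_contra h
    push_neg at h
    exact h0 (fun hvec => by simpa using h hvec)
  obtain ⟨v, hv⟩ := hex
  have hvne : v ≠ 0 := by
    rintro rfl
    have hz : clarkeDeriv g x (0 : X) = 0 := by
      unfold clarkeDeriv
      have he : (fun q : X × ℝ => (g (q.1 + q.2 • (0 : X)) - g q.1) / q.2)
          = fun _ : X × ℝ => (0 : ℝ) := by
        funext q; simp
      rw [he, Filter.limsup_const]
    linarith
  obtain ⟨r, hr, hrU⟩ := Metric.mem_nhds_iff.mp hU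
  set L := clarkeDeriv g x v with hL
  set c := -L / 2 with hc
  clear_value c
  clear_value L
  have hcpos : 0 < c := by rw [hc]; linarith
  have hvnorm : (0 : ℝ) ≤ ‖v‖ := norm_nonneg v
  -- boundedness below of the difference quotient near (x, 0+)
  have hbdd : Filter.IsBoundedUnder (· ≤ ·) ((𝓝 x) ×ˢ (𝓝[>] (0 : ℝ)))
      (fun q : X × ℝ => (g (q.1 + q.2 • v) - g q.1) / q.2) := by
    refine ⟨(K * ‖v‖), ?_⟩
    rw [Filter.eventually_map]
    have h1 : ∀ᶠ y in 𝓝 x, y ∈ Metric.ball x (r / 2) :=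
      Metric.ball_mem_nhds x (by positivity)
    have h2 : ∀ᶠ t in 𝓝[>] (0 : ℝ), t ∈ Set.Ioo (0 : ℝ) (r / (2 * (‖v‖ + 1))) :=
      Ioo_mem_nhdsGT_of_mem ⟨le_refl 0, by positivity⟩
    filter_upwards [h1.prod_mk h2] with q hq
    obtain ⟨hq1, hq2, hq3⟩ := hq
    have hq1U : q.1 ∈ U := hrU (Metric.ball_subset_ball (by linarith) hq1)
    have hq2U : q.1 + q.2 • v ∈ U := by
      apply hrU
      rw [Metric.mem_ball, dist_eq_norm]
      have : ‖q.1 + q.2 • v - x‖ ≤ ‖q.1 - x‖ + q.2 * ‖v‖ := by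
        calc ‖q.1 + q.2 • v - x‖ = ‖(q.1 - x) + q.2 • v‖ := by congr 1; abel
          _ ≤ ‖q.1 - x‖ + ‖q.2 • v‖ := norm_add_le _ _
          _ = ‖q.1 - x‖ + q.2 * ‖v‖ := by
              rw [norm_smul, Real.norm_eq_abs, abs_of_pos hq2]
      have h1' : ‖q.1 - x‖ < r / 2 := by
        rw [Metric.mem_ball, dist_eq_norm] at hq1; exact hq1
      have h2' : q.2 * ‖v‖ < r / 2 := by
        have hv1 : ‖v‖ < ‖v‖ + 1 := by linarith
        have hb : q.2 * (‖v‖ + 1) < (r / (2 * (‖v‖ + 1))) * (‖v‖ + 1) :=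
          mul_lt_mul_of_pos_right hq3 (by positivity)
        have heq : (r / (2 * (‖v‖ + 1))) * (‖v‖ + 1) = r / 2 := by
          field_simp
        nlinarith [norm_nonneg v]
      linarith
    have hd : dist (g (q.1 + q.2 • v)) (g q.1) ≤ K * dist (q.1 + q.2 • v) q.1 :=
      hK.dist_le_mul _ hq2U _ hq1U
    have hdist : dist (q.1 + q.2 • v) q.1 = q.2 * ‖v‖ := by
      rw [dist_eq_norm]
      simp [norm_smul, Real.norm_eq_abs, abs_of_pos hq2]
    rw [hdist, Real.dist_eq] at hd
    have habs2 : g (q.1 + q.2 • v) - g q.1 ≤ K * (q.2 * ‖v‖) :=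
      le_of_abs_le hd
    rw [div_le_iff₀ hq2]
    nlinarith [hq2.le]
  have hkey : ∀ᶠ q in ((𝓝 x) ×ˢ (𝓝[>] (0 : ℝ))),
      (g (q.1 + q.2 • v) - g q.1) / q.2 < -c := by
    apply Filter.eventually_lt_of_limsup_lt _ hbdd
    have : Filter.limsup (fun q : X × ℝ => (g (q.1 + q.2 • v) - g q.1) / q.2)
        ((𝓝 x) ×ˢ (𝓝[>] (0 : ℝ))) = L := hL.symm
    rw [this, hc]; linarith
  -- extract ε > 0
  obtain ⟨p, hp, hsub⟩ :=
    ((Metric.nhds_basis_ball.prod (nhdsGT_basis (0 : ℝ))).eventually_iff).mp hkey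
  obtain ⟨ε₁, ε₂⟩ := p
  obtain ⟨hε₁, hε₂⟩ := hp
  set ε := min ε₁ ε₂ with hεdef
  clear_value ε
  have hεpos : 0 < ε := by rw [hεdef]; exact lt_min hε₁ hε₂
  have hεle1 : ε ≤ ε₁ := by rw [hεdef]; exact min_le_left _ _
  have hεle2 : ε ≤ ε₂ := by rw [hεdef]; exact min_le_right _ _
  have hεkey : ∀ y ∈ Metric.ball x ε, ∀ t : ℝ, 0 < t → t < ε →
      g (y + t • v) < g y - c * t := by
    intro y hy t ht htε
    have hmem : (y, t) ∈ Metric.ball x ε₁ ×ˢ Set.Ioo (0 : ℝ) ε₂ := by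
      constructor
      · exact Metric.ball_subset_ball hεle1 hy
      · exact ⟨ht, lt_of_lt_of_le htε hεle2⟩
    have := hsub hmem
    rw [div_lt_iff₀ ht] at this
    simp only at this
    linarith
  clear hL hc hv hsub hbdd hkey h0 hxb
  -- choose γ
  set γ := min (min ε 1) (min (c / (K + 1)) (r / (‖v‖ + 3))) with hγdef
  clear_value γ
  have hγpos : 0 < γ := by
    rw [hγdef]
    apply lt_min (lt_min hεpos one_pos)
    exact lt_min (by positivity) (by positivity)
  refine ⟨v, hvne, γ, hγpos, ?_⟩
  intro t ht htγ s hs w hw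
  have hγε : γ ≤ ε := by rw [hγdef]; exact le_trans (min_le_left _ _) (min_le_left _ _)
  have hγ1 : γ ≤ 1 := by rw [hγdef]; exact le_trans (min_le_left _ _) (min_le_right _ _)
  have hγc : γ ≤ c / (K + 1) := by
    rw [hγdef]; exact le_trans (min_le_right _ _) (min_le_left _ _)
  have hγr : γ ≤ r / (‖v‖ + 3) := by
    rw [hγdef]; exact le_trans (min_le_right _ _) (min_le_right _ _)
  obtain ⟨hsS, hsball⟩ := hs
  have hsx : ‖s - x‖ < γ := by rwa [Metric.mem_ball, dist_eq_norm] at hsball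
  have hwv : ‖w - v‖ < γ := by rwa [Metric.mem_ball, dist_eq_norm] at hw
  have hγ2r : γ * (‖v‖ + 2) < r := by
    have : γ * (‖v‖ + 3) ≤ r := by
      rw [le_div_iff₀ (by positivity)] at hγr; linarith
    nlinarith
  have hγr' : γ < r := by nlinarith
  have hsvU : s + t • v ∈ U := by
    apply hrU
    rw [Metric.mem_ball, dist_eq_norm]
    calc ‖s + t • v - x‖ = ‖(s - x) + t • v‖ := by congr 1; abel
      _ ≤ ‖s - x‖ + ‖t • v‖ := norm_add_le _ _
      _ = ‖s - x‖ + t * ‖v‖ := by rw [norm_smul, Real.norm_eq_abs, abs_of_pos ht]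
      _ < γ + γ * ‖v‖ := by nlinarith
      _ ≤ γ * (‖v‖ + 2) := by nlinarith
      _ < r := hγ2r
  have hswU : s + t • w ∈ U := by
    apply hrU
    rw [Metric.mem_ball, dist_eq_norm]
    have hwn : ‖w‖ < ‖v‖ + 1 := by
      calc ‖w‖ = ‖v + (w - v)‖ := by congr 1; abel
        _ ≤ ‖v‖ + ‖w - v‖ := norm_add_le _ _
        _ < ‖v‖ + 1 := by linarith
    calc ‖s + t • w - x‖ = ‖(s - x) + t • w‖ := by congr 1; abel
      _ ≤ ‖s - x‖ + ‖t • w‖ := norm_add_le _ _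
      _ = ‖s - x‖ + t * ‖w‖ := by rw [norm_smul, Real.norm_eq_abs, abs_of_pos ht]
      _ < γ + γ * (‖v‖ + 1) := by nlinarith [norm_nonneg w]
      _ = γ * (‖v‖ + 2) := by ring
      _ < r := hγ2r
  have hsε : s ∈ Metric.ball x ε :=
    Metric.ball_subset_ball hγε hsball
  have hkey2 : g (s + t • v) < g s - c * t :=
    hεkey s hsε t ht (lt_of_lt_of_le htγ hγε)
  have hd : dist (g (s + t • w)) (g (s + t • v)) ≤ K * dist (s + t • w) (s + t • v) :=
    hK.dist_le_mul _ hswU _ hsvU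
  have hdist : dist (s + t • w) (s + t • v) = t * ‖w - v‖ := by
    rw [dist_eq_norm]
    have : s + t • w - (s + t • v) = t • (w - v) := by
      rw [smul_sub]; abel
    rw [this, norm_smul, Real.norm_eq_abs, abs_of_pos ht]
  rw [hdist, Real.dist_eq] at hd
  have hKγc : (K : ℝ) * γ ≤ c := by
    have h1 : (K : ℝ) * γ ≤ K * (c / (K + 1)) :=
      mul_le_mul_of_nonneg_left hγc K.coe_nonneg
    have h2 : (K : ℝ) * (c / (K + 1)) ≤ c := by
      have hK1 : (0 : ℝ) < (K : ℝ) + 1 := by positivity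
      have he : (K : ℝ) * (c / ((K : ℝ) + 1)) = c * ((K : ℝ) / ((K : ℝ) + 1)) := by
        ring
      rw [he]
      have hle : (K : ℝ) / ((K : ℝ) + 1) ≤ 1 := by
        rw [div_le_one hK1]; linarith
      have hnn : (0 : ℝ) ≤ (K : ℝ) / ((K : ℝ) + 1) :=
        div_nonneg K.coe_nonneg hK1.le
      exact mul_le_of_le_one_right hcpos.le hle
    linarith
  have hfin : g (s + t • w) ≤ g (s + t • v) + K * (t * ‖w - v‖) := by
    have := le_of_abs_le hd
    linarith
  have hgs : g s ≤ 0 := hsS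
  show g (s + t • w) ≤ 0
  have hKt : (K : ℝ) * (t * ‖w - v‖) ≤ c * t := by
    have h1 : (K : ℝ) * (t * ‖w - v‖) ≤ (K : ℝ) * (t * γ) :=
      mul_le_mul_of_nonneg_left (mul_le_mul_of_nonneg_left hwv.le ht.le) K.coe_nonneg
    have h2 : (K : ℝ) * (t * γ) = ((K : ℝ) * γ) * t := by ring
    have h3 : ((K : ℝ) * γ) * t ≤ c * t := mul_le_mul_of_nonneg_right hKγc ht.le
    linarith
  linarith
end

section
/- Let X be a real Banach space and let S ⊆ X be a closed set which is compactly epi-Lipschitzian (CEL) at a point x̄ in the boundary of S. Then there exists x* ∈ X* with x* ≠ 0 such that x* ∈ N(S,x̄), the Clarke normal cone to S at x̄. -/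
open Filter Metric Set Topology

section AuxClarke

variable {X : Type*} [NormedAddCommGroup X] [NormedSpace ℝ X]

lemma clarke_zero_mem (S : Set X) (x : X) : (0 : X) ∈ ClarkeTangentCone S x := by
  intro V hV
  exact ⟨Set.univ, univ_mem, 1, one_pos, fun t ht ht1 y hy =>
    ⟨0, mem_of_mem_nhds hV, by simpa using hy.2⟩⟩

lemma clarke_smul_mem {S : Set X} {x v : X} (hv : v ∈ ClarkeTangentCone S x)
    {c : ℝ} (hc : 0 < c) : c • v ∈ ClarkeTangentCone S x := by
  intro W hW
  have hV : (fun w : X => c • w) ⁻¹' W ∈ 𝓝 v := by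
    apply ContinuousAt.preimage_mem_nhds (by fun_prop) hW
  obtain ⟨U, hU, lam, hlam, hprop⟩ := hv _ hV
  refine ⟨U, hU, lam / c, div_pos hlam hc, fun t ht htl y hy => ?_⟩
  obtain ⟨w, hw, hws⟩ := hprop (t * c) (mul_pos ht hc) (by rwa [← lt_div_iff₀ hc]) y hy
  refine ⟨c • w, hw, ?_⟩
  rwa [smul_smul]

lemma clarke_add_mem {S : Set X} {x u v : X} (hu : u ∈ ClarkeTangentCone S x)
    (hv : v ∈ ClarkeTangentCone S x) : u + v ∈ ClarkeTangentCone S x := by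
  intro W hW
  obtain ⟨ε, hε, hball⟩ := Metric.mem_nhds_iff.1 hW
  obtain ⟨U₁, hU₁, l₁, hl₁, h₁⟩ := hu (Metric.ball u (ε / 2))
    (Metric.ball_mem_nhds _ (by positivity))
  obtain ⟨U₂, hU₂, l₂, hl₂, h₂⟩ := hv (Metric.ball v (ε / 2))
    (Metric.ball_mem_nhds _ (by positivity))
  obtain ⟨r, hr, hrU⟩ := Metric.mem_nhds_iff.1 (inter_mem hU₁ hU₂)
  have hden : (0 : ℝ) < ‖u‖ + ε / 2 + 1 := by positivity
  refine ⟨Metric.ball x (r / 2), Metric.ball_mem_nhds _ (by positivity),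
    min l₁ (min l₂ ((r / 2) / (‖u‖ + ε / 2 + 1))),
    lt_min hl₁ (lt_min hl₂ (by positivity)), ?_⟩
  intro t ht htl y hy
  have hyU : y ∈ Metric.ball x r := by
    have : y ∈ Metric.ball x (r / 2) := hy.1
    rw [Metric.mem_ball] at this ⊢
    linarith
  obtain ⟨w₁, hw₁, hyw₁⟩ := h₁ t ht (htl.trans_le (min_le_left _ _)) y
    ⟨(hrU hyU).1, hy.2⟩
  have hw₁n : ‖w₁‖ < ‖u‖ + ε / 2 := by
    have := Metric.mem_ball.1 hw₁
    rw [dist_eq_norm] at this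
    calc ‖w₁‖ = ‖u + (w₁ - u)‖ := by congr 1; abel
      _ ≤ ‖u‖ + ‖w₁ - u‖ := norm_add_le _ _
      _ < ‖u‖ + ε / 2 := by linarith
  have ht' : t < (r / 2) / (‖u‖ + ε / 2 + 1) :=
    htl.trans_le ((min_le_right _ _).trans (min_le_right _ _))
  have hyU₂ : y + t • w₁ ∈ Metric.ball x r := by
    rw [Metric.mem_ball, dist_eq_norm]
    have h1 : ‖y + t • w₁ - x‖ ≤ ‖y - x‖ + t * ‖w₁‖ := by
      calc ‖y + t • w₁ - x‖ = ‖(y - x) + t • w₁‖ := by congr 1; abel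
        _ ≤ ‖y - x‖ + ‖t • w₁‖ := norm_add_le _ _
        _ = ‖y - x‖ + t * ‖w₁‖ := by
            rw [norm_smul, Real.norm_eq_abs, abs_of_pos ht]
    have h2 : ‖y - x‖ < r / 2 := by
      have := Metric.mem_ball.1 hy.1
      rwa [dist_eq_norm] at this
    have h3 : t * ‖w₁‖ ≤ t * (‖u‖ + ε / 2) := by nlinarith [norm_nonneg w₁]
    have h4 : t * (‖u‖ + ε / 2 + 1) < r / 2 := (lt_div_iff₀ hden).1 ht'
    nlinarith
  obtain ⟨w₂, hw₂, hyw₂⟩ := h₂ t ht (htl.trans_le ((min_le_right _ _).trans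
    (min_le_left _ _))) (y + t • w₁) ⟨(hrU hyU₂).2, hyw₁⟩
  refine ⟨w₁ + w₂, hball ?_, ?_⟩
  · rw [Metric.mem_ball, dist_eq_norm]
    have d1 := Metric.mem_ball.1 hw₁
    have d2 := Metric.mem_ball.1 hw₂
    rw [dist_eq_norm] at d1 d2
    calc ‖w₁ + w₂ - (u + v)‖ = ‖(w₁ - u) + (w₂ - v)‖ := by congr 1; abel
      _ ≤ ‖w₁ - u‖ + ‖w₂ - v‖ := norm_add_le _ _
      _ < ε := by linarith
  · rw [smul_add, ← add_assoc]
    exact hyw₂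

lemma clarke_isClosed (S : Set X) (x : X) : IsClosed (ClarkeTangentCone S x) := by
  refine isClosed_of_closure_subset fun v hv => ?_
  intro V hV
  obtain ⟨O, hOV, hO, hvO⟩ := _root_.mem_nhds_iff.1 hV
  obtain ⟨v', hv'O, hv'T⟩ := _root_.mem_closure_iff.1 hv O hO hvO
  exact hv'T V (mem_of_superset (hO.mem_nhds hv'O) hOV)

lemma clarke_convex (S : Set X) (x : X) : Convex ℝ (ClarkeTangentCone S x) := by
  intro u hu v hv a b ha hb hab
  rcases ha.eq_or_lt with rfl | ha'
  · have hb1 : b = 1 := by linarith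
    simpa [hb1] using hv
  rcases hb.eq_or_lt with rfl | hb'
  · have ha1 : a = 1 := by linarith
    simpa [ha1] using hu
  exact clarke_add_mem (clarke_smul_mem hu ha') (clarke_smul_mem hv hb')

lemma exists_pos_le_finite {ι : Type*} {s : Set ι} (hs : s.Finite) {f : ι → ℝ}
    (hf : ∀ i ∈ s, 0 < f i) : ∃ c : ℝ, 0 < c ∧ ∀ i ∈ s, c ≤ f i := by
  rcases s.eq_empty_or_nonempty with h | h
  · exact ⟨1, one_pos, by simp [h]⟩
  · obtain ⟨a, ha, hmin⟩ := s.exists_min_image f hs h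
    exact ⟨f a, hf a ha, hmin⟩

lemma cel_interior_of_tangent_univ (S : Set X) (hS : IsClosed S) (x : X) (hx : x ∈ S)
    (hcel : CELAt S x) (hT : ∀ v : X, v ∈ ClarkeTangentCone S x) :
    x ∈ interior S := by
  classical
  obtain ⟨γ, hγ, H, hHc, hP⟩ := hcel
  obtain ⟨M₀, hM₀⟩ := hHc.isBounded.exists_norm_le
  set M : ℝ := max M₀ 0 with hM
  have hMnn : (0 : ℝ) ≤ M := le_max_right _ _
  have hMH : ∀ h ∈ H, ‖h‖ ≤ M := fun h hh => (hM₀ h hh).trans (le_max_left _ _)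
  -- finite cover of H by quarter balls
  obtain ⟨F, hFH, hFfin, hcov⟩ := hHc.elim_finite_subcover_image
    (c := fun i => Metric.ball i (4⁻¹ : ℝ))
    (fun i (_ : i ∈ H) => isOpen_ball)
    (fun h hh => Set.mem_iUnion₂.2 ⟨h, hh, Metric.mem_ball_self (by norm_num)⟩)
  -- tangency data for every direction
  have hTan : ∀ i : X, ∃ U ∈ 𝓝 x, ∃ lam : ℝ, 0 < lam ∧
      ∀ t : ℝ, 0 < t → t < lam → ∀ y ∈ U ∩ S, ∃ w ∈ Metric.ball i (4⁻¹ : ℝ),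
        y + t • w ∈ S :=
    fun i => hT i (Metric.ball i (4⁻¹ : ℝ)) (Metric.ball_mem_nhds _ (by norm_num))
  choose U hU lam hlam hprop using hTan
  have hUU : (⋂ i ∈ F, U i) ∈ 𝓝 x := (Filter.biInter_mem hFfin).2 fun i _ => hU i
  obtain ⟨ρ, hρ, hρU⟩ := Metric.mem_nhds_iff.1 hUU
  obtain ⟨l, hl, hlle⟩ := exists_pos_le_finite hFfin (f := lam) fun i _ => hlam i
  -- Key step: from a point of S near x we can move a distance τ in the direction
  -- of any h ∈ H up to error τ/2, staying in S.
  have K : ∀ τ : ℝ, 0 < τ → τ < l → ∀ y ∈ S, ‖y - x‖ < ρ → ∀ h ∈ H,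
      ∃ w : X, ‖w - h‖ < 2⁻¹ ∧ y + τ • w ∈ S := by
    intro τ hτ hτl y hyS hyx h hh
    obtain ⟨i, hiF, hhi⟩ := Set.mem_iUnion₂.1 (hcov hh)
    have hyU : y ∈ U i := by
      have : y ∈ ⋂ i ∈ F, U i := hρU (by rwa [Metric.mem_ball, dist_eq_norm])
      exact Set.mem_iInter₂.1 this i hiF
    obtain ⟨w, hw, hws⟩ := hprop i τ hτ (hτl.trans_le (hlle i hiF)) y ⟨hyU, hyS⟩
    refine ⟨w, ?_, hws⟩
    have d1 := Metric.mem_ball.1 hw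
    have d2 := Metric.mem_ball.1 hhi
    rw [dist_eq_norm] at d1 d2
    calc ‖w - h‖ = ‖(w - i) + (i - h)‖ := by congr 1; abel
      _ ≤ ‖w - i‖ + ‖i - h‖ := norm_add_le _ _
      _ < 2⁻¹ := by
          have : ‖i - h‖ = ‖h - i‖ := norm_sub_rev _ _
          rw [this]; linarith [d1, d2]
  -- choose a scale t
  set t : ℝ := min (γ / 2) (min (l / 2) (ρ / (2 * (M + 1)))) with htdef
  have ht : 0 < t := by
    refine lt_min (by positivity) (lt_min (by positivity) (by positivity))
  have htγ : t ≤ γ / 2 := min_le_left _ _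
  have htl : t ≤ l / 2 := (min_le_right _ _).trans (min_le_left _ _)
  have htρ : t ≤ ρ / (2 * (M + 1)) := (min_le_right _ _).trans (min_le_right _ _)
  have htρ' : t * (M + 1) ≤ ρ / 2 := by
    have hM1 : (0 : ℝ) < M + 1 := by positivity
    have h1 : t * (M + 1) ≤ ρ / (2 * (M + 1)) * (M + 1) :=
      mul_le_mul_of_nonneg_right htρ hM1.le
    have h2 : ρ / (2 * (M + 1)) * (M + 1) = ρ / 2 := by
      field_simp
    linarith
  -- the iteration
  have main : ∀ z : X, ‖z - x‖ < t / 2 → ∀ k : ℕ, ∃ s ∈ S, ‖z - s‖ < t / 2 ^ k := by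
    intro z hz k
    induction k with
    | zero =>
      refine ⟨x, hx, ?_⟩
      simpa using hz.trans (half_lt_self ht)
    | succ k ih =>
      obtain ⟨s, hsS, hzs⟩ := ih
      set τ : ℝ := t / 2 ^ k with hτdef
      have hτpos : 0 < τ := by positivity
      have hτt : τ ≤ t := by
        rw [hτdef]
        exact div_le_self ht.le (one_le_pow₀ one_le_two)
      have hτγ : τ ≤ γ := hτt.trans (htγ.trans (by linarith))
      set b : X := τ⁻¹ • (z - s) with hbdef
      have hb : ‖b‖ < 1 := by
        rw [hbdef, norm_smul, Real.norm_eq_abs, abs_of_pos (inv_pos.2 hτpos),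
          norm_sub_rev]
        rw [inv_mul_lt_iff₀ hτpos, mul_one]
        rwa [norm_sub_rev] at hzs
      have hsb : s + τ • b = z := by
        rw [hbdef, smul_smul, mul_inv_cancel₀ hτpos.ne', one_smul]
        abel
      have hsball : s ∈ Metric.ball x γ := by
        rw [Metric.mem_ball, dist_eq_norm]
        calc ‖s - x‖ = ‖(s - z) + (z - x)‖ := by congr 1; abel
          _ ≤ ‖s - z‖ + ‖z - x‖ := norm_add_le _ _
          _ < τ + t / 2 := by
              rw [norm_sub_rev]; exact add_lt_add hzs hz
          _ ≤ γ := by linarith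
      obtain ⟨s', hs'S, h, hhH, heq⟩ := hP τ ⟨hτpos.le, hτγ⟩ s ⟨hsS, hsball⟩ b
        (by rwa [Metric.mem_ball, dist_zero_right])
      have hzeq : z = s' + τ • h := by rw [← hsb, heq]
      have hs'x : ‖s' - x‖ < ρ := by
        have h1 : ‖s' - z‖ = τ * ‖h‖ := by
          rw [hzeq]
          have : s' - (s' + τ • h) = -(τ • h) := by abel
          rw [show s' - (s' + τ • h) = -(τ • h) from by abel, norm_neg, norm_smul,
            Real.norm_eq_abs, abs_of_pos hτpos]
        calc ‖s' - x‖ = ‖(s' - z) + (z - x)‖ := by congr 1; abel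
          _ ≤ ‖s' - z‖ + ‖z - x‖ := norm_add_le _ _
          _ < τ * ‖h‖ + t / 2 := by rw [h1]; linarith
          _ ≤ t * M + t / 2 := by
              have := hMH h hhH
              have : τ * ‖h‖ ≤ t * M := by nlinarith [norm_nonneg h]
              linarith
          _ ≤ ρ / 2 + t / 2 := by nlinarith
          _ < ρ := by
              have : t ≤ ρ / 2 := by nlinarith
              linarith
      have hτl' : τ < l := lt_of_le_of_lt hτt (lt_of_le_of_lt htl (by linarith))
      obtain ⟨w, hwh, hws⟩ := K τ hτpos hτl' s' hs'S hs'x h hhH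
      refine ⟨s' + τ • w, hws, ?_⟩
      have : z - (s' + τ • w) = τ • (h - w) := by
        rw [hzeq, smul_sub]; abel
      rw [this, norm_smul, Real.norm_eq_abs, abs_of_pos hτpos, norm_sub_rev]
      have : τ * ‖w - h‖ < τ * 2⁻¹ := by
        exact mul_lt_mul_of_pos_left hwh hτpos
      calc τ * ‖w - h‖ < τ * 2⁻¹ := this
        _ = t / 2 ^ (k + 1) := by
            rw [hτdef, pow_succ]; ring
  -- conclude: the ball of radius t/2 around x lies in S
  have hball : Metric.ball x (t / 2) ⊆ S := by
    intro z hz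
    rw [Metric.mem_ball, dist_eq_norm] at hz
    have hle : ∀ k : ℕ, Metric.infDist z S ≤ t / 2 ^ k := by
      intro k
      obtain ⟨s, hsS, hzs⟩ := main z hz k
      calc Metric.infDist z S ≤ dist z s := Metric.infDist_le_dist_of_mem hsS
        _ ≤ t / 2 ^ k := by rw [dist_eq_norm]; exact hzs.le
    have htend : Tendsto (fun k : ℕ => t / 2 ^ k) atTop (𝓝 0) := by
      have heq : (fun k : ℕ => t / 2 ^ k) = fun k : ℕ => t * (1 / 2 : ℝ) ^ k := by
        funext k
        rw [div_eq_mul_inv, one_div, inv_pow]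
      rw [heq]
      simpa using (tendsto_pow_atTop_nhds_zero_of_lt_one (by norm_num : (0:ℝ) ≤ 1/2)
        (by norm_num : (1/2 : ℝ) < 1)).const_mul t
    have h0 : Metric.infDist z S ≤ 0 := ge_of_tendsto' htend hle
    exact (hS.mem_iff_infDist_zero ⟨x, hx⟩).2
      (le_antisymm h0 Metric.infDist_nonneg)
  exact mem_interior.2 ⟨Metric.ball x (t / 2), hball, isOpen_ball,
    Metric.mem_ball_self (by positivity)⟩

end AuxClarke

/-- a closed CEL set at a boundary point has a nonzero
Clarke normal vector there. -/
theorem exists_nonzero_clarkeNormal_of_CEL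
    {X : Type*} [NormedAddCommGroup X] [NormedSpace ℝ X] [CompleteSpace X]
    (S : Set X) (hS : IsClosed S) (x : X) (hxb : x ∈ frontier S)
    (hcel : CELAt S x) :
    ∃ p : X →L[ℝ] ℝ, p ≠ 0 ∧ p ∈ ClarkeNormalCone S x := by
  have hxS : x ∈ S := hS.frontier_subset hxb
  have hxint : x ∉ interior S := hxb.2
  have hne : ∃ v : X, v ∉ ClarkeTangentCone S x := by
    by_contra h
    push_neg at h
    exact hxint (cel_interior_of_tangent_univ S hS x hxS hcel h)
  obtain ⟨v, hv⟩ := hne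
  obtain ⟨f, u, hfu, huv⟩ := geometric_hahn_banach_closed_point
    (clarke_convex S x) (clarke_isClosed S x) hv
  have hu0 : 0 < u := by simpa using hfu 0 (clarke_zero_mem S x)
  refine ⟨f, ?_, ?_⟩
  · intro h0
    rw [h0] at huv
    simp at huv
    linarith
  · intro h hh
    by_contra hpos
    push_neg at hpos
    have hc : (0 : ℝ) < u / f h + 1 := by positivity
    have hmem := clarke_smul_mem hh hc
    have hlt := hfu _ hmem
    rw [map_smul, smul_eq_mul] at hlt
    have hcancel : u / f h * f h = u := div_mul_cancel₀ u hpos.ne'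
    nlinarith
end

section
/- Let X = ℓ² be the real Hilbert space of square summable sequences with canonical orthonormal basis (eₖ), and let φ : ℓ² → ℓ² be the bounded linear operator defined by φ(Σ xᵢeᵢ) = Σ 2^{1−i} xᵢ eᵢ. Then the range Im(φ) is a proper dense linear subspace of ℓ² (in particular Im(φ) is not closed and φ is not surjective); consequently ℓ² is epi-Lipschitzian at 0 but φ(ℓ²) is not epi-Lipschitzian at 0. -/
open Filter Metric Set Topology

section Aux

local notation "L2" => lp (fun _ : ℕ => ℝ) 2

lemma aux_phi_single
    (phi : lp (fun _ : ℕ => ℝ) 2 →L[ℝ] lp (fun _ : ℕ => ℝ) 2)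
    (hphi : ∀ x : lp (fun _ : ℕ => ℝ) 2, ∀ i : ℕ,
      (phi x : ∀ _ : ℕ, ℝ) i = (2 : ℝ) ^ ((1 : ℤ) - (i : ℤ)) * (x : ∀ _ : ℕ, ℝ) i)
    (i : ℕ) (c : ℝ) :
    phi (lp.single 2 i c) = lp.single 2 i ((2 : ℝ) ^ ((1 : ℤ) - (i : ℤ)) * c) := by
  apply lp.ext
  funext j
  rw [hphi]
  by_cases hj : j = i
  · subst hj
    rw [lp.single_apply_self, lp.single_apply_self]
  · rw [lp.single_apply_ne 2 i _ hj, lp.single_apply_ne 2 i _ hj, mul_zero]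

lemma aux_single_mem_range
    (phi : lp (fun _ : ℕ => ℝ) 2 →L[ℝ] lp (fun _ : ℕ => ℝ) 2)
    (hphi : ∀ x : lp (fun _ : ℕ => ℝ) 2, ∀ i : ℕ,
      (phi x : ∀ _ : ℕ, ℝ) i = (2 : ℝ) ^ ((1 : ℤ) - (i : ℤ)) * (x : ∀ _ : ℕ, ℝ) i)
    (i : ℕ) (c : ℝ) : lp.single 2 i c ∈ Set.range phi := by
  refine ⟨lp.single 2 i ((2 : ℝ) ^ ((i : ℤ) - 1) * c), ?_⟩
  rw [aux_phi_single phi hphi]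
  congr 1
  rw [← mul_assoc, ← zpow_add₀ (two_ne_zero)]
  norm_num

lemma aux_range_ne_univ
    (phi : lp (fun _ : ℕ => ℝ) 2 →L[ℝ] lp (fun _ : ℕ => ℝ) 2)
    (hphi : ∀ x : lp (fun _ : ℕ => ℝ) 2, ∀ i : ℕ,
      (phi x : ∀ _ : ℕ, ℝ) i = (2 : ℝ) ^ ((1 : ℤ) - (i : ℤ)) * (x : ∀ _ : ℕ, ℝ) i) :
    Set.range phi ≠ Set.univ := by
  intro hsurj
  have hsur : Function.Surjective phi := Set.range_eq_univ.mp hsurj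
  have hinj : Function.Injective phi := by
    intro x y hxy
    apply lp.ext
    funext i
    have := congrArg (fun z : L2 => (z : ∀ _ : ℕ, ℝ) i) hxy
    simp only [hphi] at this
    have h2 : (2 : ℝ) ^ ((1 : ℤ) - (i : ℤ)) ≠ 0 := zpow_ne_zero _ two_ne_zero
    exact mul_left_cancel₀ h2 this
  have hker : LinearMap.ker (phi : L2 →ₗ[ℝ] L2) = ⊥ := by rw [LinearMap.ker_eq_bot]; exact hinj
  have hrange : LinearMap.range (phi : L2 →ₗ[ℝ] L2) = ⊤ := LinearMap.range_eq_top.mpr hsur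
  let e := ContinuousLinearEquiv.ofBijective phi hker hrange
  let C := ‖(e.symm : L2 →L[ℝ] L2)‖
  have hC : 0 ≤ C := norm_nonneg _
  obtain ⟨n, hn⟩ := pow_unbounded_of_one_lt C (by norm_num : (1 : ℝ) < 2)
  -- consider the basis vector e_{n+1}
  have hone : ‖lp.single (E := fun _ : ℕ => ℝ) 2 (n + 1) (1 : ℝ)‖ = 1 := by
    have := lp.norm_single (E := fun _ : ℕ => ℝ) (p := 2) (by norm_num)
      (n + 1) (1 : ℝ)
    simpa using this
  have hsymm : e.symm (phi (lp.single 2 (n + 1) (1 : ℝ))) = lp.single 2 (n + 1) (1 : ℝ) :=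
    e.symm_apply_apply _
  have hphis : phi (lp.single 2 (n + 1) (1 : ℝ)) =
      lp.single 2 (n + 1) ((2 : ℝ) ^ ((1 : ℤ) - ((n + 1 : ℕ) : ℤ))) := by
    rw [aux_phi_single phi hphi, mul_one]
  have hnorm2 : ‖phi (lp.single 2 (n + 1) (1 : ℝ))‖ = (2 : ℝ) ^ ((1 : ℤ) - ((n + 1 : ℕ) : ℤ)) := by
    rw [hphis]
    have := lp.norm_single (E := fun _ : ℕ => ℝ) (p := 2) (by norm_num)
      (n + 1) ((2 : ℝ) ^ ((1 : ℤ) - ((n + 1 : ℕ) : ℤ)))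
    rw [this, Real.norm_eq_abs, abs_of_pos (by positivity)]
  have hle : (1 : ℝ) ≤ C * (2 : ℝ) ^ ((1 : ℤ) - ((n + 1 : ℕ) : ℤ)) := by
    have := (e.symm : L2 →L[ℝ] L2).le_opNorm (phi (lp.single 2 (n + 1) (1 : ℝ)))
    rw [hnorm2] at this
    calc (1 : ℝ) = ‖lp.single (E := fun _ : ℕ => ℝ) 2 (n + 1) (1 : ℝ)‖ := hone.symm
      _ = ‖e.symm (phi (lp.single 2 (n + 1) (1 : ℝ)))‖ := by rw [hsymm]
      _ = ‖(e.symm : L2 →L[ℝ] L2) (phi (lp.single 2 (n + 1) (1 : ℝ)))‖ := rfl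
      _ ≤ C * (2 : ℝ) ^ ((1 : ℤ) - ((n + 1 : ℕ) : ℤ)) := this
  have hz : (2 : ℝ) ^ ((1 : ℤ) - ((n + 1 : ℕ) : ℤ)) = ((2 : ℝ) ^ n)⁻¹ := by
    have : (1 : ℤ) - ((n + 1 : ℕ) : ℤ) = -(n : ℤ) := by push_cast; ring
    rw [this, zpow_neg, zpow_natCast]
  rw [hz] at hle
  have h2n : (0 : ℝ) < 2 ^ n := by positivity
  have : (2 : ℝ) ^ n ≤ C := by
    have h := mul_le_mul_of_nonneg_right hle h2n.le
    rwa [one_mul, mul_assoc, inv_mul_cancel₀ h2n.ne', mul_one] at h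
  linarith

lemma aux_dense_range
    (phi : lp (fun _ : ℕ => ℝ) 2 →L[ℝ] lp (fun _ : ℕ => ℝ) 2)
    (hphi : ∀ x : lp (fun _ : ℕ => ℝ) 2, ∀ i : ℕ,
      (phi x : ∀ _ : ℕ, ℝ) i = (2 : ℝ) ^ ((1 : ℤ) - (i : ℤ)) * (x : ∀ _ : ℕ, ℝ) i) :
    Dense (Set.range phi) := by
  intro f
  have hsum : HasSum (fun i : ℕ => lp.single 2 i ((f : ∀ _ : ℕ, ℝ) i)) f :=
    lp.hasSum_single (by norm_num) f
  refine mem_closure_of_tendsto hsum (Filter.Eventually.of_forall ?_)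
  intro s
  refine ⟨∑ i ∈ s, lp.single 2 i ((2 : ℝ) ^ ((i : ℤ) - 1) * (f : ∀ _ : ℕ, ℝ) i), ?_⟩
  rw [map_sum]
  refine Finset.sum_congr rfl fun i _ => ?_
  rw [aux_phi_single phi hphi]
  congr 1
  rw [← mul_assoc, ← zpow_add₀ (two_ne_zero)]
  norm_num

end Aux

/-- the operator `φ(Σ xᵢeᵢ) = Σ 2^{1−i} xᵢ eᵢ` on `ℓ²` has proper
dense (hence non-closed) range, is not surjective; `ℓ²` is epi-Lipschitzian
at `0` but `φ(ℓ²)` is not. -/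
theorem lp_scaling_range_proper_dense_not_epiLipschitz
    (phi : lp (fun _ : ℕ => ℝ) 2 →L[ℝ] lp (fun _ : ℕ => ℝ) 2)
    (hphi : ∀ x : lp (fun _ : ℕ => ℝ) 2, ∀ i : ℕ,
      (phi x : ∀ _ : ℕ, ℝ) i = (2 : ℝ) ^ ((1 : ℤ) - (i : ℤ)) * (x : ∀ _ : ℕ, ℝ) i) :
    Set.range phi ≠ Set.univ ∧ Dense (Set.range phi) ∧
      ¬ IsClosed (Set.range phi) ∧ ¬ Function.Surjective phi ∧
      EpiLipschitzAt (Set.univ : Set (lp (fun _ : ℕ => ℝ) 2)) 0 ∧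
      ¬ EpiLipschitzAt (Set.range phi) 0 := by
  have hne := aux_range_ne_univ phi hphi
  have hdense := aux_dense_range phi hphi
  have hnotclosed : ¬ IsClosed (Set.range phi) := by
    intro hcl
    exact hne (hcl.closure_eq ▸ hdense.closure_eq)
  have hnotsurj : ¬ Function.Surjective phi := fun h => hne (Set.range_eq_univ.mpr h)
  refine ⟨hne, hdense, hnotclosed, hnotsurj, ?_, ?_⟩
  · -- univ is epi-Lipschitzian at 0
    refine ⟨lp.single 2 0 (1 : ℝ), ?_, 1, one_pos, fun t _ _ s _ w _ => Set.mem_univ _⟩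
    intro h0
    have h1 : ‖lp.single (E := fun _ : ℕ => ℝ) 2 0 (1 : ℝ)‖ = 1 := by
      have := lp.norm_single (E := fun _ : ℕ => ℝ) (p := 2) (by norm_num)
        0 (1 : ℝ)
      simpa using this
    rw [h0, norm_zero] at h1
    norm_num at h1
  · -- range phi is not epi-Lipschitzian at 0
    rintro ⟨v, hv, γ, hγ, H⟩
    -- every w in ball v γ belongs to range phi
    have hball : Metric.ball v γ ⊆ Set.range phi := by
      intro w hw
      have h0mem : (0 : lp (fun _ : ℕ => ℝ) 2) ∈ Set.range phi ∩ Metric.ball 0 γ :=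
        ⟨⟨0, map_zero phi⟩, Metric.mem_ball_self hγ⟩
      have ht1 : (0 : ℝ) < γ / 2 := by linarith
      have ht2 : γ / 2 < γ := by linarith
      obtain ⟨a, ha⟩ := H (γ / 2) ht1 ht2 0 h0mem w hw
      rw [zero_add] at ha
      refine ⟨(γ / 2)⁻¹ • a, ?_⟩
      rw [map_smul, ha, smul_smul, inv_mul_cancel₀ (ne_of_gt ht1), one_smul]
    -- hence range phi = univ, contradiction
    apply hne
    apply Set.eq_univ_of_forall
    intro z
    have hvmem : v ∈ Set.range phi := hball (Metric.mem_ball_self hγ)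
    set c : ℝ := γ / (‖z‖ + 1) with hc
    have hcpos : 0 < c := div_pos hγ (by positivity)
    have hmem : v + c • z ∈ Metric.ball v γ := by
      rw [Metric.mem_ball, dist_eq_norm, add_sub_cancel_left, norm_smul,
        Real.norm_eq_abs, abs_of_pos hcpos, hc, div_mul_eq_mul_div]
      rw [div_lt_iff₀ (by positivity)]
      nlinarith [norm_nonneg z]
    have hvz : v + c • z ∈ Set.range phi := hball hmem
    obtain ⟨a1, ha1⟩ := hvmem
    obtain ⟨a2, ha2⟩ := hvz
    refine ⟨c⁻¹ • (a2 - a1), ?_⟩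
    rw [map_smul, map_sub, ha1, ha2, add_sub_cancel_left, smul_smul,
      inv_mul_cancel₀ (ne_of_gt hcpos), one_smul]
end

section
/- Let f : ℝ → ℝ be defined by f(x) = x² sin(1/x) for x ≠ 0 and f(0) = 0, and let S = epi f ⊆ ℝ² be its epigraph and x̄ = (0,0). Then f is Lipschitz near 0, and the Clarke tangent cone satisfies T(S, x̄) = epi |·| = { (h,r) ∈ ℝ² : |h| ≤ r }. In particular T(S,x̄) contains no hyperplane of ℝ². -/
open Filter Metric Set Topology

/-- The function `x ↦ x² sin(1/x)` (with value `0` at `0`). -/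
noncomputable def fOsc : ℝ → ℝ := fun x => if x = 0 then 0 else x ^ 2 * Real.sin (1 / x)


noncomputable def gOsc : ℝ → ℝ :=
  fun x => if x = 0 then 0 else 2 * x * Real.sin (1 / x) - Real.cos (1 / x)

lemma abs_fOsc_le (x : ℝ) : |fOsc x| ≤ x ^ 2 := by
  unfold fOsc
  split_ifs with h
  · simp [sq_nonneg]
  · rw [abs_mul, abs_sq]
    nlinarith [abs_le_one_iff_mul_self_le_one.2 (by nlinarith [Real.neg_one_le_sin (1/x), Real.sin_le_one (1/x)] : Real.sin (1/x) * Real.sin (1/x) ≤ 1), sq_nonneg x, abs_nonneg (Real.sin (1/x)), sq_abs x]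

lemma hasDerivAt_fOsc (x : ℝ) : HasDerivAt fOsc (gOsc x) x := by
  rcases eq_or_ne x 0 with rfl | hx
  · have e0 : fOsc 0 = 0 := if_pos rfl
    have g0 : gOsc 0 = 0 := if_pos rfl
    rw [hasDerivAt_iff_isLittleO, e0, g0]
    simp only [sub_zero, smul_zero]
    rw [Asymptotics.isLittleO_iff]
    intro c hc
    filter_upwards [Metric.ball_mem_nhds (0:ℝ) hc] with y hy
    have h1 : |fOsc y| ≤ y ^ 2 := abs_fOsc_le y
    have h2 : |y| < c := by simpa [Real.dist_eq] using hy
    simp only [Real.norm_eq_abs]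
    nlinarith [abs_nonneg y, sq_abs y, abs_nonneg (fOsc y)]
  · have h1 : HasDerivAt (fun y : ℝ => y ^ 2 * Real.sin (1 / y))
        (2 * x * Real.sin (1 / x) - Real.cos (1 / x)) x := by
      have hinv : HasDerivAt (fun y : ℝ => 1 / y) (-(x^2)⁻¹) x := by
        simpa [one_div] using hasDerivAt_inv hx
      have hs : HasDerivAt (fun y : ℝ => Real.sin (1 / y)) (Real.cos (1/x) * (-(x^2)⁻¹)) x := by
        simpa [Function.comp_def, one_div] using (Real.hasDerivAt_sin (1/x)).comp x hinv
      have hp : HasDerivAt (fun y : ℝ => y ^ 2) (2 * x) x := by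
        simpa using hasDerivAt_pow 2 x
      have := hp.mul hs
      refine this.congr_deriv ?_
      have hx2 : x ^ 2 * (x ^ 2)⁻¹ = 1 := mul_inv_cancel₀ (pow_ne_zero 2 hx)
      linear_combination (-Real.cos (1 / x)) * hx2
    have heq : fOsc =ᶠ[𝓝 x] fun y : ℝ => y ^ 2 * Real.sin (1 / y) := by
      filter_upwards [isOpen_ne.mem_nhds hx] with y hy
      simp [fOsc, hy]
    rw [gOsc, if_neg hx]
    exact (h1.congr_of_eventuallyEq heq).congr_deriv (by ring)

lemma abs_gOsc_le (x : ℝ) : |gOsc x| ≤ 1 + 2 * |x| := by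
  unfold gOsc
  split_ifs with h
  · simp; positivity
  · have h1 := Real.neg_one_le_sin (1/x)
    have h2 := Real.sin_le_one (1/x)
    have h3 := Real.neg_one_le_cos (1/x)
    have h4 := Real.cos_le_one (1/x)
    rw [abs_le]
    constructor <;> cases' abs_cases x with hc hc <;> nlinarith

lemma fOsc_lipschitzOnWith {δ : ℝ} (hδ : 0 < δ) :
    LipschitzOnWith (Real.toNNReal (1 + 2 * δ)) fOsc (Metric.ball (0:ℝ) δ) := by
  apply Convex.lipschitzOnWith_of_nnnorm_hasDerivWithin_le (f' := gOsc) (convex_ball 0 δ)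
    (fun x _ => (hasDerivAt_fOsc x).hasDerivWithinAt)
  intro x hx
  rw [← NNReal.coe_le_coe, coe_nnnorm, Real.coe_toNNReal _ (by linarith)]
  have : |x| < δ := by simpa [Real.dist_eq] using hx
  calc ‖gOsc x‖ = |gOsc x| := rfl
    _ ≤ 1 + 2 * |x| := abs_gOsc_le x
    _ ≤ 1 + 2 * δ := by linarith

lemma fOsc_growth {a b m : ℝ} (hm : ∀ u ∈ Set.Icc a b, m ≤ gOsc u) :
    ∀ x ∈ Set.Icc a b, ∀ y ∈ Set.Icc a b, x ≤ y → m * (y - x) ≤ fOsc y - fOsc x := by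
  apply Convex.mul_sub_le_image_sub_of_le_deriv (convex_Icc a b)
  · exact fun u _ => (hasDerivAt_fOsc u).continuousAt.continuousWithinAt
  · exact fun u _ => (hasDerivAt_fOsc u).differentiableAt.differentiableWithinAt
  · intro u hu
    rw [(hasDerivAt_fOsc u).deriv]
    exact hm u (interior_subset hu)

lemma fOsc_decay {a b m : ℝ} (hm : ∀ u ∈ Set.Icc a b, gOsc u ≤ m) :
    ∀ x ∈ Set.Icc a b, ∀ y ∈ Set.Icc a b, x ≤ y → fOsc y - fOsc x ≤ m * (y - x) := by
  apply Convex.image_sub_le_mul_sub_of_deriv_le (convex_Icc a b)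
  · exact fun u _ => (hasDerivAt_fOsc u).continuousAt.continuousWithinAt
  · exact fun u _ => (hasDerivAt_fOsc u).differentiableAt.differentiableWithinAt
  · intro u hu
    rw [(hasDerivAt_fOsc u).deriv]
    exact hm u (interior_subset hu)

lemma abs_cos_sub_cos_le (a b : ℝ) : |Real.cos a - Real.cos b| ≤ |a - b| := by
  have := Convex.norm_image_sub_le_of_norm_deriv_le (f := Real.cos)
    (fun x _ => Real.differentiable_cos x) (C := 1) (fun x _ => by
      rw [Real.deriv_cos]; simpa using Real.abs_sin_le_one x) convex_univ (mem_univ b) (mem_univ a)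
  simpa using this

lemma exists_cos_point (σ : ℝ) (hσ : σ = 1 ∨ σ = -1) {M : ℝ} (hM : 0 < M) :
    ∃ x : ℝ, 0 < x ∧ x < M ∧ Real.cos (1 / x) = -σ := by
  obtain ⟨n, hn⟩ := exists_nat_gt (1 / M)
  have hπ := Real.pi_gt_three
  have hn0 : (0:ℝ) ≤ n := Nat.cast_nonneg n
  rcases hσ with rfl | rfl
  · set A : ℝ := Real.pi + n * (2 * Real.pi) with hA
    have hA0 : 0 < A := by positivity
    have hAgt : 1 / M < A := by nlinarith
    refine ⟨A⁻¹, by positivity, ?_, ?_⟩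
    · rw [show A⁻¹ = 1 / A by rw [one_div], div_lt_iff₀ hA0]
      rw [div_lt_iff₀ hM] at hAgt
      nlinarith
    · rw [one_div, inv_inv, hA]
      have : Real.pi + (n:ℝ) * (2 * Real.pi) = Real.pi + ((n:ℤ):ℝ) * (2 * Real.pi) := by push_cast; ring
      rw [this, Real.cos_add_int_mul_two_pi, Real.cos_pi]
  · set A : ℝ := (n + 1) * (2 * Real.pi) with hA
    have hA0 : 0 < A := by positivity
    have hAgt : 1 / M < A := by nlinarith
    refine ⟨A⁻¹, by positivity, ?_, ?_⟩
    · rw [show A⁻¹ = 1 / A by rw [one_div], div_lt_iff₀ hA0]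
      rw [div_lt_iff₀ hM] at hAgt
      nlinarith
    · rw [one_div, inv_inv, hA]
      have : ((n:ℝ) + 1) * (2 * Real.pi) = ((n + 1 : ℕ):ℝ) * (2 * Real.pi) := by push_cast; ring
      rw [this, Real.cos_nat_mul_two_pi]
      norm_num

lemma fOsc_osc (σ : ℝ) (hσ : σ = 1 ∨ σ = -1) {η δ : ℝ} (hη0 : 0 < η) (hη1 : η ≤ 1) (hδ : 0 < δ) :
    ∃ x c : ℝ, 0 < x ∧ x < δ ∧ |fOsc x| < δ ∧ 0 < c ∧
      ∀ s : ℝ, 0 ≤ σ * s → |s| ≤ c → (1 - η) * |s| ≤ fOsc (x + s) - fOsc x := by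
  obtain ⟨x, hx0, hxM, hcos⟩ := exists_cos_point σ hσ
    (show (0:ℝ) < min δ (min (η/9) 1) by positivity)
  have hxδ : x < δ := lt_of_lt_of_le hxM (min_le_left _ _)
  have hxη : x ≤ η/9 := le_of_lt (lt_of_lt_of_le hxM ((min_le_right _ _).trans (min_le_left _ _)))
  have hx1 : x < 1 := lt_of_lt_of_le hxM ((min_le_right _ _).trans (min_le_right _ _))
  set c : ℝ := (η/8) * x^2 with hcdef
  have hc0 : 0 < c := by positivity
  have hcx : c ≤ x/2 := by nlinarith
  refine ⟨x, c, hx0, hxδ, ?_, hc0, ?_⟩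
  · calc |fOsc x| ≤ x^2 := abs_fOsc_le x
      _ < δ := by nlinarith
  have hbound : ∀ u ∈ Set.Icc (x - c) (x + c), 1 - η ≤ σ * gOsc u := by
    intro u hu
    obtain ⟨hul, hur⟩ := hu
    have hu0 : x/2 ≤ u := by linarith
    have hu0' : 0 < u := by linarith
    have hne : u ≠ 0 := ne_of_gt hu0'
    have hgu : gOsc u = 2*u*Real.sin (1/u) - Real.cos (1/u) := if_neg hne
    have hdiff : |1/u - 1/x| ≤ η/4 := by
      rw [div_sub_div _ _ hne (ne_of_gt hx0), abs_div, div_le_iff₀ (by positivity)]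
      have h1 : |1 * x - u * 1| ≤ c := by
        rw [one_mul, mul_one, abs_sub_comm, abs_le]; constructor <;> linarith
      have h2 : |u * x| = u * x := abs_of_pos (by positivity)
      rw [h2]
      nlinarith
    have hcos' : |Real.cos (1/u) - Real.cos (1/x)| ≤ η/4 :=
      le_trans (abs_cos_sub_cos_le _ _) hdiff
    have hsin1 := Real.neg_one_le_sin (1/u)
    have hsin2 := Real.sin_le_one (1/u)
    rw [hcos] at hcos'
    obtain ⟨hl, hr⟩ := abs_le.1 hcos'
    rw [hgu]
    rcases hσ with rfl | rfl
    · have hprod : -(2*u) ≤ 2*u*Real.sin (1/u) := by nlinarith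
      nlinarith
    · have hprod : 2*u*Real.sin (1/u) ≤ 2*u := by nlinarith
      nlinarith
  intro s hs hsc
  obtain ⟨hsl, hsr⟩ := abs_le.1 hsc
  rcases hσ with rfl | rfl
  · have hs' : 0 ≤ s := by linarith [hs]
    have key := fOsc_growth (a := x - c) (b := x + c) (m := 1 - η)
      (fun u hu => by linarith [hbound u hu])
      x ⟨by linarith, by linarith⟩ (x+s) ⟨by linarith, by linarith⟩ (by linarith)
    rw [abs_of_nonneg hs']
    linarith [key]
  · have hs' : s ≤ 0 := by nlinarith
    have key := fOsc_decay (a := x - c) (b := x + c) (m := -(1 - η))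
      (fun u hu => by linarith [hbound u hu])
      (x+s) ⟨by linarith, by linarith⟩ x ⟨by linarith, by linarith⟩ (by linarith)
    rw [abs_of_nonpos hs']
    nlinarith [key]

set_option maxHeartbeats 1000000 in
lemma cone_eq_epi_abs :
    ClarkeTangentCone {p : ℝ × ℝ | fOsc p.1 ≤ p.2} ((0 : ℝ), (0 : ℝ))
      = {p : ℝ × ℝ | |p.1| ≤ p.2} := by
  ext p
  constructor
  · intro hmem
    simp only [Set.mem_setOf_eq]
    by_contra hlt
    push_neg at hlt
    rcases eq_or_ne p.1 0 with hp1 | hp1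
    · -- case p.1 = 0, p.2 < 0
      rw [hp1] at hlt
      simp only [abs_zero] at hlt
      set ε : ℝ := -p.2/2 with hεdef
      have hε : 0 < ε := by simp only [hεdef]; linarith
      obtain ⟨U, hU, lam, hlam, hprop⟩ := hmem (Metric.ball p ε) (Metric.ball_mem_nhds _ hε)
      set t : ℝ := min (lam/2) (1/(ε+1)) with htdef
      have ht0 : 0 < t := lt_min (by linarith) (by positivity)
      have htlam : t < lam := lt_of_le_of_lt (min_le_left _ _) (by linarith)
      have htε : t * (ε + 1) ≤ 1 := by
        have : t ≤ 1/(ε+1) := min_le_right _ _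
        rw [le_div_iff₀ (by positivity)] at this
        linarith
      clear_value t
      obtain ⟨w, hwV, hwS⟩ := hprop t ht0 htlam ((0:ℝ), (0:ℝ))
        ⟨mem_of_mem_nhds hU, by simp [fOsc]⟩
      have hwS' : fOsc ((0:ℝ) + t * w.1) ≤ (0:ℝ) + t * w.2 := hwS
      rw [zero_add, zero_add] at hwS'
      rw [Metric.mem_ball, Prod.dist_eq, max_lt_iff, Real.dist_eq, Real.dist_eq, hp1,
        sub_zero] at hwV
      obtain ⟨hw1, hw2⟩ := hwV
      have hw2' : w.2 < -ε := by
        have h2 := (abs_lt.1 hw2).2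
        linarith [hεdef.ge, hεdef.le]
      have hlow := abs_fOsc_le (t * w.1)
      have hlow' : -((t*w.1)^2) ≤ fOsc (t*w.1) := by
        have := neg_abs_le (fOsc (t*w.1)); linarith
      have hsq : w.1^2 < ε^2 := by nlinarith [abs_nonneg w.1, sq_abs w.1]
      nlinarith [mul_pos ht0 hε, sq_nonneg (t*w.1), mul_pos ht0 ht0]
    · -- case p.1 ≠ 0
      set h : ℝ := p.1 with hhdef
      set r : ℝ := p.2 with hrdef
      have hh0 : 0 < |h| := abs_pos.2 hp1
      set σ : ℝ := if 0 < h then 1 else -1 with hσdef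
      have hσ : σ = 1 ∨ σ = -1 := by
        simp only [hσdef]; split_ifs <;> simp
      have hσh : σ * h = |h| := by
        simp only [hσdef]; split_ifs with hc
        · rw [one_mul, abs_of_pos hc]
        · push_neg at hc
          rw [abs_of_nonpos hc]; ring
      set η : ℝ := min (1/4) ((|h| - r)/(4*|h|)) with hηdef
      have hη0 : 0 < η := lt_min (by norm_num) (div_pos (by linarith) (by positivity))
      have hη4 : η ≤ 1/4 := min_le_left _ _
      have hηh : η * |h| ≤ (|h| - r)/4 := by
        have h1 : η ≤ (|h| - r)/(4*|h|) := min_le_right _ _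
        rw [le_div_iff₀ (by positivity)] at h1
        linarith
      set ε : ℝ := min ((|h| - r)/4) (|h|/2) with hεdef
      have hε0 : 0 < ε := lt_min (by linarith) (by linarith)
      have hε1 : ε ≤ (|h| - r)/4 := min_le_left _ _
      have hε2 : ε ≤ |h|/2 := min_le_right _ _
      have hkey : r + ε < (1 - η) * (|h| - ε) := by nlinarith
      clear_value h r σ η ε
      obtain ⟨U, hU, lam, hlam, hprop⟩ := hmem (Metric.ball p ε) (Metric.ball_mem_nhds _ hε0)
      obtain ⟨δ, hδ0, hδU⟩ := Metric.mem_nhds_iff.1 hU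
      obtain ⟨x, c, hx0, hxδ, hfxδ, hc0, hgrow⟩ :=
        fOsc_osc σ hσ hη0 (by linarith) hδ0
      set t : ℝ := min (lam/2) (c/(|h| + ε)) with htdef
      have ht0 : 0 < t := lt_min (by linarith) (by positivity)
      have htlam : t < lam := lt_of_le_of_lt (min_le_left _ _) (by linarith)
      have htc : t * (|h| + ε) ≤ c := by
        have : t ≤ c/(|h|+ε) := min_le_right _ _
        rw [le_div_iff₀ (by positivity)] at this
        linarith
      clear_value t
      have hyU : ((x : ℝ), fOsc x) ∈ U := by
        apply hδU
        rw [Metric.mem_ball, Prod.dist_eq, max_lt_iff, Real.dist_eq, Real.dist_eq,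
          sub_zero, sub_zero, abs_of_pos hx0]
        exact ⟨hxδ, hfxδ⟩
      obtain ⟨w, hwV, hwS⟩ := hprop t ht0 htlam ((x : ℝ), fOsc x) ⟨hyU, show fOsc x ≤ fOsc x from le_refl _⟩
      have hwS' : fOsc (x + t * w.1) ≤ fOsc x + t * w.2 := hwS
      rw [Metric.mem_ball, Prod.dist_eq, max_lt_iff, Real.dist_eq, Real.dist_eq] at hwV
      obtain ⟨hw1, hw2⟩ := hwV
      rw [← hhdef] at hw1
      rw [← hrdef] at hw2
      have hw1' := abs_le.1 hw1.le
      have hw2' : w.2 < r + ε := by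
        have := (abs_lt.1 hw2).2; linarith
      have hσw : |h| - ε ≤ σ * w.1 := by
        rcases hσ with h1 | h1 <;> rw [h1] at hσh ⊢ <;> nlinarith [hw1'.1, hw1'.2]
      have habsw : σ * w.1 ≤ |w.1| := by
        rcases hσ with h1 | h1 <;> rw [h1]
        · rw [one_mul]; exact le_abs_self _
        · rw [neg_one_mul]; exact neg_le_abs _
      have habsw2 : |w.1| ≤ |h| + ε := by
        have := abs_sub_abs_le_abs_sub w.1 h
        linarith [hw1.le]
      have hσw0 : 0 ≤ σ * w.1 := by linarith
      have hσs : 0 ≤ σ * (t * w.1) := by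
        rw [mul_left_comm]; exact mul_nonneg ht0.le hσw0
      have hsc : |t * w.1| ≤ c := by
        rw [abs_mul, abs_of_pos ht0]
        have := mul_le_mul_of_nonneg_left habsw2 ht0.le
        linarith
      have hkey2 := hgrow (t * w.1) hσs hsc
      rw [abs_mul, abs_of_pos ht0] at hkey2
      -- chain of inequalities for contradiction
      have hη1' : (0:ℝ) ≤ 1 - η := by linarith
      have s1 : (1 - η) * (t * (σ * w.1)) ≤ (1 - η) * (t * |w.1|) :=
        mul_le_mul_of_nonneg_left (mul_le_mul_of_nonneg_left habsw ht0.le) hη1'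
      have s2 : (1 - η) * (t * (|h| - ε)) ≤ (1 - η) * (t * (σ * w.1)) :=
        mul_le_mul_of_nonneg_left (mul_le_mul_of_nonneg_left hσw ht0.le) hη1'
      have s3 : t * (r + ε) < (1 - η) * (t * (|h| - ε)) := by
        nlinarith [mul_lt_mul_of_pos_left hkey ht0]
      have s4 : t * w.2 < t * (r + ε) := mul_lt_mul_of_pos_left hw2' ht0
      linarith
  · intro hp V hV
    simp only [Set.mem_setOf_eq] at hp
    obtain ⟨ε, hε, hball⟩ := Metric.mem_nhds_iff.1 hV
    set h : ℝ := p.1 with hhdef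
    set r : ℝ := p.2 with hrdef
    set δ : ℝ := min 1 (ε/(4*(|h| + 1))) with hδdef
    have hδ0 : 0 < δ := lt_min one_pos (by positivity)
    have hδ1 : δ ≤ 1 := min_le_left _ _
    have hδε : δ * (4*(|h| + 1)) ≤ ε := by
      have : δ ≤ ε/(4*(|h|+1)) := min_le_right _ _
      rw [le_div_iff₀ (by positivity)] at this
      linarith
    clear_value h r δ
    refine ⟨Metric.ball ((0:ℝ),(0:ℝ)) (δ/2), Metric.ball_mem_nhds _ (by linarith),
      δ/(2*(|h| + 1)), by positivity, ?_⟩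
    intro t ht0 htlam y hy
    obtain ⟨hyU, hyS⟩ := hy
    have hyS' : fOsc y.1 ≤ y.2 := hyS
    rw [Metric.mem_ball, Prod.dist_eq, max_lt_iff, Real.dist_eq, Real.dist_eq,
      sub_zero, sub_zero] at hyU
    refine ⟨(h, r + ε/2), ?_, ?_⟩
    · apply hball
      rw [Metric.mem_ball, Prod.dist_eq, Real.dist_eq, Real.dist_eq, ← hhdef, ← hrdef,
        max_lt_iff]
      constructor
      · rw [sub_self, abs_zero]; linarith
      · rw [show r + ε/2 - r = ε/2 by ring, abs_of_pos (by linarith)]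
        linarith
    · show fOsc (y.1 + t * h) ≤ y.2 + t * (r + ε/2)
      have hth : t * |h| < δ/2 := by
        have h1 : t * (2*(|h|+1)) ≤ δ := by
          rw [← le_div_iff₀ (by positivity)]
          exact htlam.le
        nlinarith [abs_nonneg h]
      have hy1 : y.1 ∈ Metric.ball (0:ℝ) δ := by
        rw [Metric.mem_ball, Real.dist_eq, sub_zero]
        linarith [hyU.1]
      have hy1' : y.1 + t * h ∈ Metric.ball (0:ℝ) δ := by
        rw [Metric.mem_ball, Real.dist_eq, sub_zero]
        calc |y.1 + t * h| ≤ |y.1| + |t * h| := abs_add_le _ _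
          _ < δ/2 + δ/2 := by
              rw [abs_mul, abs_of_pos ht0]
              exact add_lt_add hyU.1 hth
          _ = δ := by ring
      have hlip := (fOsc_lipschitzOnWith hδ0).dist_le_mul _ hy1' _ hy1
      rw [Real.dist_eq, Real.dist_eq, Real.coe_toNNReal _ (by linarith)] at hlip
      have hlip' : fOsc (y.1 + t * h) - fOsc y.1 ≤ (1 + 2*δ) * |t * h| := by
        have := abs_le.1 hlip
        simpa using this.2
      rw [abs_mul, abs_of_pos ht0] at hlip'
      have hfinal : (1 + 2*δ) * (t * |h|) ≤ t * (r + ε/2) := by nlinarith [abs_nonneg h]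
      linarith

/-- `fOsc` is Lipschitz near `0`, the Clarke tangent cone to its
epigraph at `(0,0)` is `epi |·|`, and this cone contains no hyperplane of `ℝ²`. -/
theorem clarkeTangentCone_epi_xsq_sin_inv :
    LipschitzNear fOsc 0 ∧
      ClarkeTangentCone {p : ℝ × ℝ | fOsc p.1 ≤ p.2} ((0 : ℝ), (0 : ℝ))
        = {p : ℝ × ℝ | |p.1| ≤ p.2} ∧
      ∀ l : ℝ × ℝ →L[ℝ] ℝ, l ≠ 0 →
        ¬ ({p : ℝ × ℝ | l p = 0} ⊆
            ClarkeTangentCone {p : ℝ × ℝ | fOsc p.1 ≤ p.2} ((0 : ℝ), (0 : ℝ))) := by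
  refine ⟨⟨Real.toNNReal (1 + 2*1), Metric.ball 0 1, Metric.ball_mem_nhds _ one_pos,
    fOsc_lipschitzOnWith one_pos⟩, cone_eq_epi_abs, ?_⟩
  intro l hl hsub
  rw [cone_eq_epi_abs] at hsub
  set v : ℝ × ℝ := (l ((0:ℝ),(1:ℝ)), -(l ((1:ℝ),(0:ℝ)))) with hvdef
  have hlv : l v = 0 := by
    have hsplit : v = l ((0:ℝ),(1:ℝ)) • ((1:ℝ),(0:ℝ)) + (-(l ((1:ℝ),(0:ℝ)))) • ((0:ℝ),(1:ℝ)) := by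
      simp [hvdef, Prod.ext_iff]
    rw [hsplit, map_add, map_smul, map_smul, smul_eq_mul, smul_eq_mul]
    ring
  have h1 : |v.1| ≤ v.2 := hsub hlv
  have hlv' : l (-v) = 0 := by rw [map_neg, hlv, neg_zero]
  have h2 : |(-v).1| ≤ (-v).2 := hsub hlv'
  rw [Prod.fst_neg, Prod.snd_neg, abs_neg] at h2
  have hv1 : v.1 = 0 := by
    have := abs_nonneg v.1
    have : |v.1| = 0 := le_antisymm (by linarith) (abs_nonneg _)
    exact abs_eq_zero.1 this
  have hv2 : v.2 = 0 := le_antisymm (by linarith [abs_nonneg v.1]) (by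
    have := abs_nonneg v.1; linarith)
  apply hl
  have e01 : l ((0:ℝ),(1:ℝ)) = 0 := hv1
  have e10 : l ((1:ℝ),(0:ℝ)) = 0 := by
    have : -(l ((1:ℝ),(0:ℝ))) = 0 := hv2
    linarith
  apply ContinuousLinearMap.ext
  intro q
  have hq : q = q.1 • ((1:ℝ),(0:ℝ)) + q.2 • ((0:ℝ),(1:ℝ)) := by
    simp [Prod.ext_iff]
  rw [hq, map_add, map_smul, map_smul, smul_eq_mul, smul_eq_mul, e01, e10]
  simp
end

section
/- Let E be a real Banach space and f : E → ℝ be Lipschitz continuous near x̄. Then the Clarke tangent cone T(epi f, (x̄, f(x̄))) to the epigraph of f contains a closed hyperplane of E × ℝ if and only if f is strictly Hadamard differentiable at x̄. -/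
open Filter Metric Set Topology

private lemma key_upper {E : Type*} [NormedAddCommGroup E] [NormedSpace ℝ E] {f : E → ℝ} {x : E} {K : NNReal} {R : ℝ} (hR : 0 < R)
    (hK : LipschitzOnWith K f (Metric.ball x R)) {h : E} {r : ℝ}
    (hT : (h, r) ∈ ClarkeTangentCone {p : E × ℝ | f p.1 ≤ p.2} (x, f x))
    {ε : ℝ} (hε : 0 < ε) :
    ∀ᶠ q : E × ℝ in 𝓝 x ×ˢ 𝓝[>] (0:ℝ),
      f (q.1 + q.2 • h) - f q.1 ≤ q.2 * (r + ε) := by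
  have hK1 : (0:ℝ) < (K:ℝ) + 1 := by positivity
  set δ : ℝ := ε / ((K:ℝ) + 1) with hδdef
  have hδ : 0 < δ := div_pos hε hK1
  have hδε : ((K:ℝ) + 1) * δ = ε := by
    rw [hδdef]; field_simp
  obtain ⟨U, hU, lam, hlam, H⟩ := hT (Metric.ball ((h, r)) δ) (Metric.ball_mem_nhds _ hδ)
  obtain ⟨μ, hμ, hμU⟩ := Metric.mem_nhds_iff.1 hU
  set r₁ : ℝ := min (μ / ((K:ℝ) + 1)) (R / 2) with hr₁def
  have hr₁ : 0 < r₁ := lt_min (div_pos hμ hK1) (by linarith)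
  have hr₁μ : ((K:ℝ) + 1) * r₁ ≤ μ := by
    calc ((K:ℝ) + 1) * r₁ ≤ ((K:ℝ) + 1) * (μ / ((K:ℝ) + 1)) := by
          have := min_le_left (μ / ((K:ℝ) + 1)) (R / 2)
          nlinarith
    _ = μ := by field_simp
  have hr₁R : r₁ ≤ R / 2 := min_le_right _ _
  have hhδ : (0:ℝ) < ‖h‖ + δ + 1 := by positivity
  set t₀ : ℝ := min lam (R / (2 * (‖h‖ + δ + 1))) with ht₀def
  have ht₀ : 0 < t₀ := lt_min hlam (by positivity)
  have hEv1 : ∀ᶠ y in 𝓝 x, y ∈ Metric.ball x r₁ := Metric.ball_mem_nhds _ hr₁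
  have hEv2 : ∀ᶠ t in 𝓝[>] (0:ℝ), t ∈ Ioo 0 t₀ :=
    Ioo_mem_nhdsGT_of_mem ⟨le_refl 0, ht₀⟩
  filter_upwards [Filter.Eventually.prod_mk hEv1 hEv2] with q hq
  obtain ⟨y, t⟩ := q
  obtain ⟨hy, ht⟩ := hq
  simp only at hy ht ⊢
  have hyx : dist y x < r₁ := Metric.mem_ball.1 hy
  have hyR : y ∈ Metric.ball x R := by
    rw [Metric.mem_ball]; linarith
  have hfy : dist (f y) (f x) ≤ (K:ℝ) * dist y x :=
    hK.dist_le_mul y hyR x (Metric.mem_ball_self hR)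
  have hyU : (y, f y) ∈ U := by
    apply hμU
    rw [Metric.mem_ball, Prod.dist_eq, max_lt_iff]
    have hd0 : (0:ℝ) ≤ dist y x := dist_nonneg
    constructor
    · nlinarith [K.coe_nonneg]
    · have : (K:ℝ) * dist y x ≤ (K:ℝ) * r₁ := by nlinarith [K.coe_nonneg]
      nlinarith
  obtain ⟨w, hwV, hwS⟩ := H t ht.1 (lt_of_lt_of_le ht.2 (min_le_left _ _)) (y, f y)
    ⟨hyU, le_refl (f y)⟩
  have hwball : dist w.1 h < δ ∧ dist w.2 r < δ := by
    have := Metric.mem_ball.1 hwV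
    rw [Prod.dist_eq, max_lt_iff] at this
    exact this
  have hwS' : f (y + t • w.1) ≤ f y + t * w.2 := hwS
  have htb : t * (‖h‖ + δ) < R / 2 := by
    have h2 : t < R / (2 * (‖h‖ + δ + 1)) := lt_of_lt_of_le ht.2 (min_le_right _ _)
    rw [lt_div_iff₀ (by positivity)] at h2
    nlinarith [ht.1]
  have hyh : y + t • h ∈ Metric.ball x R := by
    rw [Metric.mem_ball]
    have h1 : dist (y + t • h) x ≤ ‖t • h‖ + dist y x := by
      calc dist (y + t • h) x ≤ dist (y + t • h) y + dist y x := dist_triangle _ _ _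
      _ = ‖t • h‖ + dist y x := by rw [dist_self_add_left]
    have h2 : ‖t • h‖ ≤ t * (‖h‖ + δ) := by
      rw [norm_smul, Real.norm_eq_abs, abs_of_pos ht.1]
      nlinarith [ht.1]
    linarith
  have hw1 : ‖w.1‖ < ‖h‖ + δ := by
    calc ‖w.1‖ = ‖(w.1 - h) + h‖ := by rw [sub_add_cancel]
    _ ≤ ‖w.1 - h‖ + ‖h‖ := norm_add_le _ _
    _ < δ + ‖h‖ := by
        have := hwball.1
        rw [dist_eq_norm] at this
        linarith
    _ = ‖h‖ + δ := by ring
  have hyw : y + t • w.1 ∈ Metric.ball x R := by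
    rw [Metric.mem_ball]
    have h1 : dist (y + t • w.1) x ≤ ‖t • w.1‖ + dist y x := by
      calc dist (y + t • w.1) x ≤ dist (y + t • w.1) y + dist y x := dist_triangle _ _ _
      _ = ‖t • w.1‖ + dist y x := by rw [dist_self_add_left]
    have h2 : ‖t • w.1‖ ≤ t * (‖h‖ + δ) := by
      rw [norm_smul, Real.norm_eq_abs, abs_of_pos ht.1]
      nlinarith [ht.1]
    linarith
  have hlip : dist (f (y + t • h)) (f (y + t • w.1)) ≤ (K:ℝ) * dist (y + t • h) (y + t • w.1) :=
    hK.dist_le_mul _ hyh _ hyw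
  have hdd : dist (y + t • h) (y + t • w.1) = t * dist h w.1 := by
    rw [dist_add_left, dist_eq_norm, ← smul_sub, norm_smul, Real.norm_eq_abs,
      abs_of_pos ht.1, ← dist_eq_norm]
  have e1 : f (y + t • h) - f (y + t • w.1) ≤ (K:ℝ) * (t * dist h w.1) := by
    calc f (y + t • h) - f (y + t • w.1) ≤ |f (y + t • h) - f (y + t • w.1)| := le_abs_self _
    _ = dist (f (y + t • h)) (f (y + t • w.1)) := (Real.dist_eq _ _).symm
    _ ≤ (K:ℝ) * dist (y + t • h) (y + t • w.1) := hlip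
    _ = (K:ℝ) * (t * dist h w.1) := by rw [hdd]
  have e2 : (K:ℝ) * (t * dist h w.1) ≤ (K:ℝ) * (t * δ) := by
    have hd := hwball.1
    rw [dist_comm] at hd
    exact mul_le_mul_of_nonneg_left (mul_le_mul_of_nonneg_left hd.le ht.1.le) K.coe_nonneg
  have e3 : w.2 ≤ r + δ := by
    have := hwball.2
    rw [Real.dist_eq] at this
    have := abs_lt.1 this
    linarith [this.2]
  have e4 : t * w.2 ≤ t * (r + δ) := mul_le_mul_of_nonneg_left e3 ht.1.le
  calc f (y + t • h) - f y
      ≤ (f (y + t • w.1) + (K:ℝ) * (t * δ)) - f y := by linarith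
    _ ≤ (f y + t * (r + δ) + (K:ℝ) * (t * δ)) - f y := by linarith
    _ = t * (r + ((K:ℝ) + 1) * δ) := by ring
    _ = t * (r + ε) := by rw [hδε]

set_option maxHeartbeats 2000000 in
/-- for `f` Lipschitz near `x̄`, `T(epi f, (x̄, f x̄))` contains a
closed hyperplane of `E × ℝ` iff `f` is strictly Hadamard differentiable at `x̄`. -/
theorem clarkeTangentCone_epigraph_contains_hyperplane_iff_strictHadamard
    {E : Type*} [NormedAddCommGroup E] [NormedSpace ℝ E] [CompleteSpace E]
    (f : E → ℝ) (x : E) (hf : LipschitzNear f x) :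
    (∃ l : (E × ℝ) →L[ℝ] ℝ, l ≠ 0 ∧
        {p : E × ℝ | l p = 0} ⊆ ClarkeTangentCone {p : E × ℝ | f p.1 ≤ p.2} (x, f x)) ↔
      StrictHadamardDiffAt f x := by
  obtain ⟨K, U₀, hU₀, hlipU⟩ := hf
  obtain ⟨R, hR, hRU⟩ := Metric.mem_nhds_iff.1 hU₀
  have hK : LipschitzOnWith K f (Metric.ball x R) := hlipU.mono hRU
  constructor
  · rintro ⟨l, hl, hsub⟩
    set c : ℝ := l (0, 1) with hc
    by_cases hc0 : c = 0
    · exfalso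
      have hm : ((0:E), -(K:ℝ) - 1) ∈ {p : E × ℝ | l p = 0} := by
        have heq : ((0:E), -(K:ℝ) - 1) = (-(K:ℝ) - 1) • ((0:E), (1:ℝ)) := by
          simp [Prod.smul_mk]
        simp only [mem_setOf_eq, heq, map_smul, smul_eq_mul, ← hc, hc0, mul_zero]
      have hup := key_upper hR hK (hsub hm) (ε := 1/2) (by norm_num)
      have hpos : ∀ᶠ q : E × ℝ in 𝓝 x ×ˢ 𝓝[>] (0:ℝ), 0 < q.2 :=
        (eventually_mem_nhdsWithin (s := Ioi (0:ℝ))).prod_inr _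
      have hneg : ∀ᶠ q : E × ℝ in 𝓝 x ×ˢ 𝓝[>] (0:ℝ), False := by
        filter_upwards [hup, hpos] with q h1 h2
        simp only [smul_zero, add_zero, sub_self] at h1
        nlinarith [K.coe_nonneg]
      obtain ⟨q, hq⟩ := hneg.exists
      exact hq
    · set D : E →L[ℝ] ℝ := -(c⁻¹) • (l.comp (ContinuousLinearMap.inl ℝ E ℝ)) with hDdef
      have hDapp : ∀ h : E, D h = -(c⁻¹) * l (h, 0) := fun h => rfl
      have hmem : ∀ h : E, ((h, D h) : E × ℝ) ∈ {p : E × ℝ | l p = 0} := by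
        intro h
        simp only [mem_setOf_eq]
        have hsplit : ((h, D h) : E × ℝ) = (h, 0) + (D h) • ((0:E), (1:ℝ)) := by
          simp [Prod.smul_mk]
        rw [hsplit, map_add, map_smul, smul_eq_mul, ← hc, hDapp]
        field_simp
        ring
      refine ⟨D, fun h => ?_⟩
      rw [Metric.tendsto_nhds]
      intro ε hε
      have hε4 : (0:ℝ) < ε/4 := by positivity
      have hA := key_upper hR hK (hsub (hmem h)) hε4
      have hB0 := key_upper hR hK (hsub (hmem (-h))) hε4
      have hshift : Tendsto (fun q : E × ℝ => (q.1 + q.2 • h, q.2))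
          (𝓝 x ×ˢ 𝓝[>] (0:ℝ)) (𝓝 x ×ˢ 𝓝[>] (0:ℝ)) := by
        apply Tendsto.prodMk
        · have h2 : Tendsto (fun q : E × ℝ => q.2) (𝓝 x ×ˢ 𝓝[>] (0:ℝ)) (𝓝 (0:ℝ)) :=
            tendsto_snd.mono_right nhdsWithin_le_nhds
          have := (tendsto_fst (f := 𝓝 x) (g := 𝓝[>] (0:ℝ))).add (h2.smul_const h)
          simpa using this
        · exact tendsto_snd
      have hB : ∀ᶠ q : E × ℝ in 𝓝 x ×ˢ 𝓝[>] (0:ℝ),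
          f q.1 - f (q.1 + q.2 • h) ≤ q.2 * (-(D h) + ε/4) := by
        filter_upwards [hshift.eventually hB0] with q hq
        simp only [smul_neg, add_neg_cancel_right, map_neg] at hq
        exact hq
      -- transfer to the triple filter
      have hπ : Tendsto (fun q : ℝ × E × E => (q.2.1, q.1))
          ((𝓝[>] (0:ℝ)) ×ˢ (𝓝 x) ×ˢ (𝓝 h)) (𝓝 x ×ˢ 𝓝[>] (0:ℝ)) :=
        (tendsto_fst.comp tendsto_snd).prodMk tendsto_fst
      have hA' := hπ.eventually hA
      have hB' := hπ.eventually hB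
      have hpos : ∀ᶠ q : ℝ × E × E in (𝓝[>] (0:ℝ)) ×ˢ (𝓝 x) ×ˢ (𝓝 h), 0 < q.1 :=
        (eventually_mem_nhdsWithin (s := Ioi (0:ℝ))).prod_inl _
      obtain ⟨δu, hδu0, hδu1, hKδ⟩ :
          ∃ δu : ℝ, 0 < δu ∧ δu ≤ 1 ∧ (K:ℝ) * δu ≤ ε/4 := by
        refine ⟨min 1 (ε/(4*((K:ℝ)+1))), lt_min one_pos (by positivity), min_le_left _ _, ?_⟩
        have h1 : min 1 (ε/(4*((K:ℝ)+1))) ≤ ε/(4*((K:ℝ)+1)) := min_le_right _ _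
        have h2 : (K:ℝ) * min 1 (ε/(4*((K:ℝ)+1))) ≤ (K:ℝ) * (ε/(4*((K:ℝ)+1))) :=
          mul_le_mul_of_nonneg_left h1 K.coe_nonneg
        have h3 : (K:ℝ) * (ε/(4*((K:ℝ)+1))) ≤ ε/4 := by
          rw [mul_div_assoc', div_le_div_iff₀ (by positivity) (by norm_num)]
          nlinarith [K.coe_nonneg]
        linarith
      have huh : ∀ᶠ q : ℝ × E × E in (𝓝[>] (0:ℝ)) ×ˢ (𝓝 x) ×ˢ (𝓝 h),
          ‖q.2.2 - h‖ < δu := by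
        have : ∀ᶠ u in 𝓝 h, ‖u - h‖ < δu := by
          have := Metric.ball_mem_nhds h hδu0
          filter_upwards [this] with u hu
          rw [← dist_eq_norm]; exact Metric.mem_ball.1 hu
        exact (this.prod_inr _).prod_inr _
      have hyball : ∀ᶠ q : ℝ × E × E in (𝓝[>] (0:ℝ)) ×ˢ (𝓝 x) ×ˢ (𝓝 h),
          q.2.1 ∈ Metric.ball x (R/2) := by
        have hy : ∀ᶠ y in 𝓝 x, y ∈ Metric.ball x (R/2) :=
          Metric.ball_mem_nhds x (by linarith)
        exact (hy.prod_inl _).prod_inr _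
      have hhn : (0:ℝ) < ‖h‖ + 2 := by positivity
      obtain ⟨t₁, ht₁, ht₁R⟩ : ∃ t₁ : ℝ, 0 < t₁ ∧ t₁ * (‖h‖ + 2) = R/2 := by
        refine ⟨R/(2*(‖h‖+2)), by positivity, ?_⟩
        field_simp
      have htsmall : ∀ᶠ q : ℝ × E × E in (𝓝[>] (0:ℝ)) ×ˢ (𝓝 x) ×ˢ (𝓝 h),
          q.1 < t₁ := by
        have : ∀ᶠ t in 𝓝[>] (0:ℝ), t ∈ Ioo 0 t₁ := Ioo_mem_nhdsGT_of_mem ⟨le_refl 0, ht₁⟩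
        exact ((this.mono fun t ht => ht.2).prod_inl _)
      filter_upwards [hA', hB', hpos, huh, hyball, htsmall] with q hqA hqB hqt hqu hqy hqt1
      obtain ⟨t, y, u⟩ := q
      simp only at hqA hqB hqt hqu hqy hqt1 ⊢
      clear hA hB hB0 hA' hB' hpos huh hyball htsmall hshift hπ hsub hmem hl hRU hlipU hU₀
      clear_value D c
      clear hDapp hDdef hc hc0
      -- both points in the ball of radius R
      have hub : ‖u‖ < ‖h‖ + 1 := by
        have h1 : ‖u‖ ≤ ‖u - h‖ + ‖h‖ := by
          calc ‖u‖ = ‖(u - h) + h‖ := by rw [sub_add_cancel]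
          _ ≤ ‖u - h‖ + ‖h‖ := norm_add_le _ _
        linarith
      have hyu : y + t • u ∈ Metric.ball x R := by
        rw [Metric.mem_ball]
        have h1 : dist (y + t • u) x ≤ ‖t • u‖ + dist y x := by
          calc dist (y + t • u) x ≤ dist (y + t • u) y + dist y x := dist_triangle _ _ _
          _ = ‖t • u‖ + dist y x := by rw [dist_self_add_left]
        have h2 : ‖t • u‖ ≤ t * (‖h‖ + 1) := by
          rw [norm_smul, Real.norm_eq_abs, abs_of_pos hqt]
          nlinarith
        have h3 : t * (‖h‖ + 1) < R / 2 := by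
          have e1 : t * (‖h‖ + 1) ≤ t * (‖h‖ + 2) :=
            mul_le_mul_of_nonneg_left (by linarith) hqt.le
          have e2 : t * (‖h‖ + 2) < t₁ * (‖h‖ + 2) := mul_lt_mul_of_pos_right hqt1 hhn
          have e3 := e1.trans_lt e2
          rwa [ht₁R] at e3
        have h5 : dist y x < R/2 := Metric.mem_ball.1 hqy
        linarith
      have hyh2 : y + t • h ∈ Metric.ball x R := by
        rw [Metric.mem_ball]
        have h1 : dist (y + t • h) x ≤ ‖t • h‖ + dist y x := by
          calc dist (y + t • h) x ≤ dist (y + t • h) y + dist y x := dist_triangle _ _ _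
          _ = ‖t • h‖ + dist y x := by rw [dist_self_add_left]
        have h2 : ‖t • h‖ ≤ t * (‖h‖ + 1) := by
          rw [norm_smul, Real.norm_eq_abs, abs_of_pos hqt]
          nlinarith
        have h3 : t * (‖h‖ + 1) < R / 2 := by
          have e1 : t * (‖h‖ + 1) ≤ t * (‖h‖ + 2) :=
            mul_le_mul_of_nonneg_left (by linarith) hqt.le
          have e2 : t * (‖h‖ + 2) < t₁ * (‖h‖ + 2) := mul_lt_mul_of_pos_right hqt1 hhn
          have e3 := e1.trans_lt e2
          rwa [ht₁R] at e3
        have h5 : dist y x < R/2 := Metric.mem_ball.1 hqy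
        linarith
      -- Lipschitz comparison between directions u and h
      have hlp : |f (y + t • u) - f (y + t • h)| ≤ (K:ℝ) * (t * δu) := by
        have h1 : dist (f (y + t • u)) (f (y + t • h)) ≤ (K:ℝ) * dist (y + t • u) (y + t • h) :=
          hK.dist_le_mul _ hyu _ hyh2
        have h2 : dist (y + t • u) (y + t • h) = t * ‖u - h‖ := by
          rw [dist_add_left, dist_eq_norm, ← smul_sub, norm_smul, Real.norm_eq_abs,
            abs_of_pos hqt]
        rw [Real.dist_eq, h2] at h1
        calc |f (y + t • u) - f (y + t • h)| ≤ (K:ℝ) * (t * ‖u - h‖) := h1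
        _ ≤ (K:ℝ) * (t * δu) :=
          mul_le_mul_of_nonneg_left (mul_le_mul_of_nonneg_left hqu.le hqt.le) K.coe_nonneg
      -- central estimate
      have hcen : |f (y + t • h) - f y - t * D h| ≤ t * (ε/4) := by
        rw [abs_le]
        constructor
        · nlinarith
        · nlinarith
      have htot : |f (y + t • u) - f y - t * D h| ≤ t * (ε/2) := by
        have e0 : |f (y + t • u) - f y - t * D h| ≤
            |f (y + t • u) - f (y + t • h)| + |f (y + t • h) - f y - t * D h| := by
          have e00 : f (y + t • u) - f y - t * D h =
              (f (y + t • u) - f (y + t • h)) + (f (y + t • h) - f y - t * D h) := by ring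
          rw [e00]
          exact abs_add_le _ _
        have e1 : (K:ℝ) * (t * δu) ≤ t * (ε/4) := by
          have e10 : (K:ℝ) * (t * δu) = t * ((K:ℝ) * δu) := by ring
          rw [e10]
          exact mul_le_mul_of_nonneg_left hKδ hqt.le
        have e2 : t * (ε/4) + t * (ε/4) = t * (ε/2) := by ring
        linarith
      rw [Real.dist_eq, smul_eq_mul]
      have hrw : t⁻¹ * (f (y + t • u) - f y - t * D h) =
          t⁻¹ * (f (y + t • u) - f y) - D h := by
        rw [mul_sub, ← mul_assoc, inv_mul_cancel₀ (ne_of_gt hqt), one_mul]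
      rw [← hrw, abs_mul, abs_inv, abs_of_pos hqt]
      have hfin : t⁻¹ * |f (y + t • u) - f y - t * D h| ≤ t⁻¹ * (t * (ε/2)) :=
        mul_le_mul_of_nonneg_left htot (by positivity)
      have hfin2 : t⁻¹ * (t * (ε/2)) = ε/2 := by
        rw [← mul_assoc, inv_mul_cancel₀ (ne_of_gt hqt), one_mul]
      linarith
  · rintro ⟨D, hD⟩
    refine ⟨ContinuousLinearMap.snd ℝ E ℝ - D.comp (ContinuousLinearMap.fst ℝ E ℝ), ?_, ?_⟩
    · intro hcontra
      have h1 : ((0:E),(1:ℝ)).2 - D ((0:E),(1:ℝ)).1 = 0 := by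
        have := DFunLike.congr_fun hcontra ((0:E),(1:ℝ))
        simpa using this
      simp at h1
    · rintro ⟨h, r⟩ hp
      have hr : r = D h := by
        simp only [mem_setOf_eq, ContinuousLinearMap.sub_apply,
          ContinuousLinearMap.coe_snd', ContinuousLinearMap.coe_comp',
          Function.comp_apply, ContinuousLinearMap.coe_fst'] at hp
        linarith
      subst hr
      intro V hV
      obtain ⟨ε, hε, hball⟩ := Metric.mem_nhds_iff.1 hV
      have hq := hD h
      rw [Metric.tendsto_nhds] at hq
      have hev := hq (ε/2) (by positivity)
      have hmap : Tendsto (fun q : ℝ × E => (q.1, q.2, h)) ((𝓝[>] (0:ℝ)) ×ˢ 𝓝 x)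
          ((𝓝[>] (0:ℝ)) ×ˢ (𝓝 x) ×ˢ (𝓝 h)) :=
        tendsto_fst.prodMk (tendsto_snd.prodMk tendsto_const_nhds)
      have hev2 := hmap.eventually hev
      rw [eventually_prod_iff] at hev2
      obtain ⟨pa, hpa, pb, hpb, hpab⟩ := hev2
      obtain ⟨t₀, ht₀, hIoo⟩ := mem_nhdsGT_iff_exists_Ioo_subset.1 hpa
      refine ⟨{y : E | pb y} ×ˢ (univ : Set ℝ), prod_mem_nhds hpb univ_mem, t₀, ht₀, ?_⟩
      intro t ht1 ht2 p hpmem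
      obtain ⟨y, s⟩ := p
      have hpb' : pb y := hpmem.1.1
      have hfs : f y ≤ s := hpmem.2
      have hdist := hpab (hIoo ⟨ht1, ht2⟩) hpb'
      simp only [smul_eq_mul] at hdist
      clear hq hev hmap
      obtain ⟨Q, hQ⟩ : ∃ Q : ℝ, Q = t⁻¹ * (f (y + t • h) - f y) := ⟨_, rfl⟩
      rw [← hQ] at hdist
      obtain ⟨ρ, hρ⟩ : ∃ ρ : ℝ, ρ = max Q (D h) := ⟨_, rfl⟩
      refine ⟨(h, ρ), ?_, ?_⟩
      · apply hball
        rw [Metric.mem_ball, Prod.dist_eq]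
        rw [max_lt_iff]
        constructor
        · simpa using hε
        · rw [Real.dist_eq]
          have h1 : |Q - D h| < ε/2 := by
            have := hdist
            rw [Real.dist_eq] at this
            exact this
          have h2 : ρ - D h ≤ |Q - D h| := by
            rw [hρ, ← max_sub_sub_right]
            exact max_le (le_abs_self _) (by rw [sub_self]; exact abs_nonneg _)
          have h3 : 0 ≤ ρ - D h := by
            rw [hρ]
            exact sub_nonneg.2 (le_max_right _ _)
          rw [abs_of_nonneg h3]
          linarith
      · show f ((y, s) + t • (h, ρ)).1 ≤ ((y, s) + t • (h, ρ)).2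
        simp only [Prod.fst_add, Prod.snd_add, Prod.smul_mk, smul_eq_mul]
        have hQρ : Q ≤ ρ := by rw [hρ]; exact le_max_left _ _
        have ht1' : t ≠ 0 := ne_of_gt ht1
        have h1 : f (y + t • h) - f y = t * Q := by
          rw [hQ, ← mul_assoc, mul_inv_cancel₀ (ne_of_gt ht1), one_mul]
        have h2 : t * Q ≤ t * ρ := mul_le_mul_of_nonneg_left hQρ ht1.le
        linarith
end
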